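/- In the two-sample Hadamard differentiable functional setting, without assuming the hypothesis T(𝔽_n, 𝔾_r) = Q(𝔽_n, 𝔾_r): for every ε > 0, P( KS_N/(nr)^{1/4} ≥ sup_{z ∈ [-∞,∞]^u} |T(F,G)(z) − Q(F,G)(z)| − ε + o_p(1) ) → 1 as min{n,r} → ∞, and for every ε > 0, P( CvM_N/(nr)^{1/2} ≥ ∫ (T(F,G)(z) − Q(F,G)(z))² dT(J)(z) − ε + o_p(1) ) → 1 as min{n,r} → ∞, where J = j(F,G). -/

import Mathlib

open MeasureTheory ProbabilityTheory Filter Topology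
open scoped ENNReal NNReal

noncomputable section

/-- The (multivariate) distribution function of a measure on `ℝ^m`,
evaluated via the coordinatewise (partial) order. -/
def cdfm {m : ℕ} (μ : Measure (Fin m → ℝ)) : (Fin m → ℝ) → ℝ :=
  fun x => (μ {y | y ≤ x}).toReal

/-- `K` is a (multivariate) distribution function. -/
def IsCDF {m : ℕ} (K : (Fin m → ℝ) → ℝ) : Prop :=
  ∃ μ : Measure (Fin m → ℝ), IsProbabilityMeasure μ ∧ K = cdfm μ

/-- The `m`-dimensional standard normal distribution. -/
def stdGaussian (m : ℕ) : Measure (Fin m → ℝ) :=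
  Measure.pi fun _ => gaussianReal 0 1

/-- The metric `ρ(x,y) = ∫ |1(w ≤ x) − 1(w ≤ y)| dΦ(w)`, `Φ` the `m`-dimensional
standard normal distribution function. -/
def rho {m : ℕ} (x y : Fin m → ℝ) : ℝ :=
  ∫ w, |Set.indicator {v : Fin m → ℝ | v ≤ x} (fun _ => (1 : ℝ)) w -
        Set.indicator {v : Fin m → ℝ | v ≤ y} (fun _ => (1 : ℝ)) w| ∂(stdGaussian m)

/-- Standing assumptions on the triangular array of weights:
nonnegativity, row sums one, `√n · max_i α_{i,n} → 0` and `n Σ_i α_{i,n}² → κ ∈ [1,∞)`. -/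
def WeightsOK (α : ℕ → ℕ → ℝ) (κ : ℝ) : Prop :=
  (∀ n, ∀ i ∈ Finset.Icc 1 n, 0 ≤ α n i) ∧
  (∀ n, 1 ≤ n → ∑ i ∈ Finset.Icc 1 n, α n i = 1) ∧
  Tendsto (fun n : ℕ => Real.sqrt n * ⨆ i ∈ Finset.Icc 1 n, α n i) atTop (𝓝 0) ∧
  Tendsto (fun n : ℕ => (n : ℝ) * ∑ i ∈ Finset.Icc 1 n, (α n i) ^ 2) atTop (𝓝 κ) ∧
  1 ≤ κ

/-- Outer expectation `E*(g) = inf { E(h) : h integrable, g ≤ h }`. -/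
def outerExp {Ω : Type*} [MeasurableSpace Ω] (P : Measure Ω) (g : Ω → ℝ) : ℝ :=
  ⨅ h : {h : Ω → ℝ // Integrable h P ∧ ∀ ω, g ω ≤ h ω}, ∫ ω, h.1 ω ∂P

/-- The supremum "distance" on `ℓ∞(T)` (possibly infinite). -/
def supEDist {T : Type*} (f g : T → ℝ) : ℝ≥0∞ :=
  ⨆ t, ENNReal.ofReal |f t - g t|

/-- Continuity with respect to the supremum metric on `ℓ∞(T)`. -/
def SupContinuous {T : Type*} (F : (T → ℝ) → ℝ) : Prop :=
  ∀ f : T → ℝ, ∀ ε > (0 : ℝ), ∃ δ > (0 : ℝ), ∀ g : T → ℝ,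
    supEDist f g < ENNReal.ofReal δ → |F g - F f| < ε

/-- Convergence in distribution in `ℓ∞(T)`: outer expectations of bounded,
sup-metric continuous functions converge. -/
def ConvInDistSup {ι Ω Ω' T : Type*} [MeasurableSpace Ω] [MeasurableSpace Ω']
    (l : Filter ι) (P : Measure Ω) (P' : Measure Ω')
    (W : ι → Ω → T → ℝ) (L : Ω' → T → ℝ) : Prop :=
  ∀ F : (T → ℝ) → ℝ, SupContinuous F → (∃ C, ∀ f, |F f| ≤ C) →
    Tendsto (fun n => outerExp P (fun ω => F (W n ω))) l
      (𝓝 (outerExp P' (fun ω => F (L ω))))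

/-- Convergence in distribution of real-valued statistics (via outer expectations). -/
def ConvInDistR {ι Ω Ω' : Type*} [MeasurableSpace Ω] [MeasurableSpace Ω']
    (l : Filter ι) (P : Measure Ω) (P' : Measure Ω')
    (S : ι → Ω → ℝ) (L : Ω' → ℝ) : Prop :=
  ∀ F : ℝ → ℝ, Continuous F → (∃ C, ∀ x, |F x| ≤ C) →
    Tendsto (fun n => outerExp P (fun ω => F (S n ω))) l
      (𝓝 (outerExp P' (fun ω => F (L ω))))

/-- A process all of whose finite-dimensional linear functionals are Gaussian. -/
def IsGaussianProcess {Ω T : Type*} [MeasurableSpace Ω] (P : Measure Ω)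
    (U : Ω → T → ℝ) : Prop :=
  ∀ (p : ℕ) (t : Fin p → T) (a : Fin p → ℝ),
    ∃ (μ : ℝ) (v : ℝ≥0),
      Measure.map (fun ω => ∑ j, a j * U ω (t j)) P = gaussianReal μ v

/-- A mean-zero Gaussian process with covariance function `c` whose sample paths are
a.s. uniformly continuous w.r.t. the pseudometric `d`. -/
def IsGaussianLimit {Ω : Type*} {T : Type*} [MeasurableSpace Ω] (P : Measure Ω)
    (U : Ω → T → ℝ) (c : T → T → ℝ) (d : T → T → ℝ) : Prop :=
  IsGaussianProcess P U ∧
  (∀ t, Measurable fun ω => U ω t) ∧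
  (∀ t, ∫ ω, U ω t ∂P = 0) ∧
  (∀ s t, ∫ ω, U ω s * U ω t ∂P = c s t) ∧
  (∀ᵐ ω ∂P, ∀ ε > (0 : ℝ), ∃ δ > (0 : ℝ), ∀ s t, d s t < δ → |U ω s - U ω t| < ε)

/-- The weighted empirical distribution function of `X_1, …, X_n`. -/
def empCDF {Ω : Type*} {m : ℕ} (α : ℕ → ℕ → ℝ) (X : ℕ → Ω → Fin m → ℝ)
    (n : ℕ) (ω : Ω) (x : Fin m → ℝ) : ℝ :=
  ∑ i ∈ Finset.Icc 1 n, α n i * Set.indicator {y : Fin m → ℝ | y ≤ x} (fun _ => (1 : ℝ)) (X i ω)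

/-- The weighted empirical distribution function of the `n`-th row of a triangular array. -/
def empCDFrow {Ω : Type*} {m : ℕ} (α : ℕ → ℕ → ℝ) (Y : ℕ → ℕ → Ω → Fin m → ℝ)
    (n : ℕ) (ω : Ω) (x : Fin m → ℝ) : ℝ :=
  ∑ i ∈ Finset.Icc 1 n, α n i * Set.indicator {y : Fin m → ℝ | y ≤ x} (fun _ => (1 : ℝ)) (Y n i ω)

/-- The law of the `i`-th observation. -/
def lawOf {Ω : Type*} [MeasurableSpace Ω] {E : Type*} [MeasurableSpace E]
    (P : Measure Ω) (X : ℕ → Ω → E) (i : ℕ) : Measure E :=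
  Measure.map (X i) P

/-- The mixture distribution function `𝔽_n = Σ_i α_{i,n} F_i`. -/
def mixCDF {Ω : Type*} [MeasurableSpace Ω] {m : ℕ} (P : Measure Ω) (α : ℕ → ℕ → ℝ)
    (X : ℕ → Ω → Fin m → ℝ) (n : ℕ) (x : Fin m → ℝ) : ℝ :=
  ∑ i ∈ Finset.Icc 1 n, α n i * cdfm (lawOf P X i) x

/-- The weighted empirical process of a triangular array (centered at the mixture). -/
def triEmpProc {Ω : Type*} [MeasurableSpace Ω] {m : ℕ} (P : Measure Ω) (α : ℕ → ℕ → ℝ)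
    (ξ : ℕ → ℕ → Ω → Fin m → ℝ) (n : ℕ) (ω : Ω) (x : Fin m → ℝ) : ℝ :=
  Real.sqrt n * (empCDFrow α ξ n ω x -
    ∑ i ∈ Finset.Icc 1 n, α n i * cdfm (Measure.map (ξ n i) P) x)

/-- Lower `p`-quantile of the distribution of the statistic `S` under `P`. -/
def lowerQuantile {Ω : Type*} [MeasurableSpace Ω] (P : Measure Ω) (S : Ω → ℝ) (p : ℝ) : ℝ :=
  sInf {t : ℝ | p ≤ (P {ω | S ω ≤ t}).toReal}

/-- Extend a finite vector of observations to a sequence (1-based). -/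
def extendVec {E : Type*} [Inhabited E] (n : ℕ) (ys : Fin n → E) : ℕ → E :=
  fun i => if h : 1 ≤ i ∧ i ≤ n then ys ⟨i - 1, by omega⟩ else default

/-- The `p`-quantile of the Kolmogorov–Smirnov statistic computed under i.i.d.
observations with distribution `ν`. -/
def ksQuant {m : ℕ} (α : ℕ → ℕ → ℝ) (ν : Measure (Fin m → ℝ))
    (hν : IsProbabilityMeasure ν) (n : ℕ) (p : ℝ) : ℝ := by
  haveI := hν
  exact lowerQuantile (Measure.pi fun _ : Fin n => ν)
    (fun ys => Real.sqrt n * ⨆ x : Fin m → ℝ,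
      |(∑ i : Fin n, α n (i.1 + 1) *
          Set.indicator {y : Fin m → ℝ | y ≤ x} (fun _ => (1 : ℝ)) (ys i)) - cdfm ν x|) p

/-- The `p`-quantile of the Cramér–von-Mises statistic computed under i.i.d.
observations with distribution `ν`. -/
def cvmQuant {m : ℕ} (α : ℕ → ℕ → ℝ) (ν : Measure (Fin m → ℝ))
    (hν : IsProbabilityMeasure ν) (n : ℕ) (p : ℝ) : ℝ := by
  haveI := hν
  exact lowerQuantile (Measure.pi fun _ : Fin n => ν)
    (fun ys => (n : ℝ) * ∫ x, ((∑ i : Fin n, α n (i.1 + 1) *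
        Set.indicator {y : Fin m → ℝ | y ≤ x} (fun _ => (1 : ℝ)) (ys i)) - cdfm ν x) ^ 2 ∂ν) p

/- ### Parametric setting -/

/-- The continuous linear map `θ' ↦ ⟨v, θ'⟩` on `ℝ^d`, realizing a gradient. -/
def projCLM {d : ℕ} (v : Fin d → ℝ) : (Fin d → ℝ) →L[ℝ] ℝ :=
  ∑ j, v j • (ContinuousLinearMap.proj j : (Fin d → ℝ) →L[ℝ] ℝ)

/-- The estimator `ϑ̂_n = t_n(X_1,…,X_n)`. -/
def thetaHat {Ω : Type*} {m d : ℕ} (tn : ℕ → (ℕ → Fin m → ℝ) → Fin d → ℝ)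
    (X : ℕ → Ω → Fin m → ℝ) (n : ℕ) (ω : Ω) : Fin d → ℝ :=
  tn n (fun i => X i ω)

/-- The estimator applied to the `n`-th row of a triangular array,
`ϑ̂_n^{(n)} = t_n(X_1^{(n)},…,X_n^{(n)})`. -/
def thetaHatRow {Ω : Type*} {m d : ℕ} (tn : ℕ → (ℕ → Fin m → ℝ) → Fin d → ℝ)
    (Y : ℕ → ℕ → Ω → Fin m → ℝ) (n : ℕ) (ω : Ω) : Fin d → ℝ :=
  tn n (fun i => Y n i ω)

/-- Condition (C1): smoothness of `θ ↦ G_n(x,θ)` on an open convex neighborhood `U_ϑ ⊆ Θ`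
of `ϑ` with gradient `g_n(x,θ)`, continuous in `θ`. -/
def CondC1 {m d : ℕ} (νG : ℕ → (Fin d → ℝ) → Measure (Fin m → ℝ))
    (Uθ : Set (Fin d → ℝ)) (ϑ : Fin d → ℝ) (Θ : Set (Fin d → ℝ))
    (gn : ℕ → (Fin m → ℝ) → (Fin d → ℝ) → Fin d → ℝ) : Prop :=
  IsOpen Uθ ∧ Convex ℝ Uθ ∧ ϑ ∈ Uθ ∧ Uθ ⊆ Θ ∧
  (∀ n x, ∀ θ ∈ Uθ, HasFDerivAt (fun θ' => cdfm (νG n θ') x) (projCLM (gn n x θ)) θ) ∧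
  (∀ n x, ContinuousOn (gn n x) Uθ)

/-- Condition (C2): `g_n → g` uniformly on `ℝ̄^m × U_ϑ`, `g` uniformly continuous there,
and `g(·,ϑ)` bounded. -/
def CondC2 {m d : ℕ} (Uθ : Set (Fin d → ℝ)) (ϑ : Fin d → ℝ)
    (gn : ℕ → (Fin m → ℝ) → (Fin d → ℝ) → Fin d → ℝ)
    (g : (Fin m → ℝ) → (Fin d → ℝ) → Fin d → ℝ) : Prop :=
  TendstoUniformlyOn (fun n (p : (Fin m → ℝ) × (Fin d → ℝ)) => gn n p.1 p.2)
    (fun p => g p.1 p.2) atTop (Set.univ ×ˢ Uθ) ∧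
  UniformContinuousOn (fun p : (Fin m → ℝ) × (Fin d → ℝ) => g p.1 p.2) (Set.univ ×ˢ Uθ) ∧
  ∃ C, ∀ x, ‖g x ϑ‖ ≤ C

/-- Condition (C3): integrability and centering of the influence functions `ℓ_n(·,ϑ)` and
the asymptotically linear expansion `√n(ϑ̂_n − ϑ) = √n Σ_i α_{i,n} ℓ_n(X_i,ϑ) + o_p(1)`. -/
def CondC3 {Ω : Type*} [MeasurableSpace Ω] {m d : ℕ} (P : Measure Ω)
    (X : ℕ → Ω → Fin m → ℝ) (α : ℕ → ℕ → ℝ)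
    (ℓ : ℕ → (Fin m → ℝ) → Fin d → ℝ) (θhat : ℕ → Ω → Fin d → ℝ)
    (ϑ : Fin d → ℝ) : Prop :=
  (∀ n, Measurable (ℓ n)) ∧
  (∀ n, ∀ i ∈ Finset.Icc 1 n, Integrable (ℓ n) (lawOf P X i) ∧
      ∀ j k, Integrable (fun x => ℓ n x j * ℓ n x k) (lawOf P X i)) ∧
  (∀ n, 1 ≤ n → (∑ i ∈ Finset.Icc 1 n, α n i • (∫ x, ℓ n x ∂(lawOf P X i))) = 0) ∧
  TendstoInMeasure P
    (fun (n : ℕ) ω => Real.sqrt n • (θhat n ω - ϑ) -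
      Real.sqrt n • ∑ i ∈ Finset.Icc 1 n, α n i • ℓ n (X i ω)) atTop (fun _ => 0)

/-- Condition (C4): convergence of the weighted covariance quantities
`n Σ_i α_{i,n}² v_{i,n}(ϑ) → κ v(ϑ)`, `n Σ_i α_{i,n}² w_{i,n}(x,ϑ) → κ w(x,ϑ)`, together
with the Lindeberg-type condition. -/
def CondC4 {Ω : Type*} [MeasurableSpace Ω] {m d : ℕ} (P : Measure Ω)
    (X : ℕ → Ω → Fin m → ℝ) (α : ℕ → ℕ → ℝ) (κ : ℝ)
    (ℓ : ℕ → (Fin m → ℝ) → Fin d → ℝ)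
    (v : Fin d → Fin d → ℝ) (w : (Fin m → ℝ) → Fin d → ℝ) : Prop :=
  (∀ j k, Tendsto (fun n : ℕ => (n : ℝ) * ∑ i ∈ Finset.Icc 1 n, (α n i) ^ 2 *
      ∫ x, (ℓ n x j - (∫ y, ℓ n y ∂(lawOf P X i)) j) *
           (ℓ n x k - (∫ y, ℓ n y ∂(lawOf P X i)) k) ∂(lawOf P X i))
    atTop (𝓝 (κ * v j k))) ∧
  (∀ x j, Tendsto (fun n : ℕ => (n : ℝ) * ∑ i ∈ Finset.Icc 1 n, (α n i) ^ 2 *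
      ((∫ y, ℓ n y j * Set.indicator {z : Fin m → ℝ | z ≤ x} (fun _ => (1 : ℝ)) y
          ∂(lawOf P X i)) -
        (∫ y, ℓ n y ∂(lawOf P X i)) j * cdfm (lawOf P X i) x))
    atTop (𝓝 (κ * w x j))) ∧
  (∀ a : Fin d → ℝ, ∀ t > (0 : ℝ),
    Tendsto (fun n : ℕ => (n : ℝ) * ∑ i ∈ Finset.Icc 1 n, (α n i) ^ 2 *
      ∫ x, (1 + (∑ j, a j * (ℓ n x j - (∫ y, ℓ n y ∂(lawOf P X i)) j)) ^ 2) *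
        Set.indicator {x' : Fin m → ℝ |
            t < (Real.sqrt n * ⨆ j ∈ Finset.Icc 1 n, α n j) ^ 2 *
              (∑ j, a j * (ℓ n x' j - (∫ y, ℓ n y ∂(lawOf P X i)) j)) ^ 2}
          (fun _ => (1 : ℝ)) x ∂(lawOf P X i))
    atTop (𝓝 0))

/-- Condition (C5): influence functions `ℓ_n(·,θ̃)` centered under `G_n(·,θ̃)` with finite
second moments, and the asymptotically linear expansion of `ϑ̂_n^{(n)}`. -/
def CondC5 {Ω : Type*} [MeasurableSpace Ω] {m d : ℕ} (P : Measure Ω)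
    (Y : ℕ → ℕ → Ω → Fin m → ℝ) (α : ℕ → ℕ → ℝ)
    (νG : ℕ → (Fin d → ℝ) → Measure (Fin m → ℝ)) (Uθ : Set (Fin d → ℝ))
    (ℓp : ℕ → (Fin m → ℝ) → (Fin d → ℝ) → Fin d → ℝ)
    (θhatMC : ℕ → Ω → Fin d → ℝ) (θseq : ℕ → Fin d → ℝ) : Prop :=
  (∀ n, ∀ θ ∈ Uθ, Measurable (fun x => ℓp n x θ)) ∧
  (∀ n, ∀ θ ∈ Uθ, Integrable (fun x => ℓp n x θ) (νG n θ) ∧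
      (∀ j k, Integrable (fun x => ℓp n x θ j * ℓp n x θ k) (νG n θ)) ∧
      (∫ x, ℓp n x θ ∂(νG n θ)) = 0) ∧
  TendstoInMeasure P
    (fun (n : ℕ) ω => Real.sqrt n • (θhatMC n ω - θseq n) -
      Real.sqrt n • ∑ i ∈ Finset.Icc 1 n, α n i • ℓp n (Y n i ω) (θseq n)) atTop (fun _ => 0)

/-- Condition (C6): convergence `v_n^{()}(ϑ_n) → v^{()}(ϑ)`, `w_n^{()}(·,ϑ_n) → w^{()}(·,ϑ)`
and the corresponding Lindeberg-type condition. -/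
def CondC6 {m d : ℕ} (α : ℕ → ℕ → ℝ)
    (νG : ℕ → (Fin d → ℝ) → Measure (Fin m → ℝ))
    (ℓp : ℕ → (Fin m → ℝ) → (Fin d → ℝ) → Fin d → ℝ)
    (θseq : ℕ → Fin d → ℝ)
    (vpar : Fin d → Fin d → ℝ) (wpar : (Fin m → ℝ) → Fin d → ℝ) : Prop :=
  (∀ j k, Tendsto (fun n => ∫ x, ℓp n x (θseq n) j * ℓp n x (θseq n) k ∂(νG n (θseq n)))
      atTop (𝓝 (vpar j k))) ∧
  (∀ y j, Tendsto (fun n => ∫ x, ℓp n x (θseq n) j *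
      Set.indicator {z : Fin m → ℝ | z ≤ y} (fun _ => (1 : ℝ)) x ∂(νG n (θseq n)))
      atTop (𝓝 (wpar y j))) ∧
  (∀ a : Fin d → ℝ, ∀ t > (0 : ℝ), Tendsto (fun n =>
      ∫ x, (1 + (∑ j, a j * ℓp n x (θseq n) j) ^ 2) *
        Set.indicator {x' : Fin m → ℝ |
            t < (Real.sqrt n * ⨆ j ∈ Finset.Icc 1 n, α n j) ^ 2 *
              (∑ j, a j * ℓp n x' (θseq n) j) ^ 2} (fun _ => (1 : ℝ)) x ∂(νG n (θseq n)))
      atTop (𝓝 0))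

/-- The `p`-quantile of the parametric Kolmogorov–Smirnov statistic (with re-estimated
parameter) computed under i.i.d. observations with distribution `ν_n(θ)`. -/
def ksQuantParam {m d : ℕ} (α : ℕ → ℕ → ℝ) (tn : ℕ → (ℕ → Fin m → ℝ) → Fin d → ℝ)
    (νG : ℕ → (Fin d → ℝ) → Measure (Fin m → ℝ))
    (hν : ∀ n θ, IsProbabilityMeasure (νG n θ)) (n : ℕ) (θ : Fin d → ℝ) (p : ℝ) : ℝ := by
  haveI := hν n θ
  exact lowerQuantile (Measure.pi fun _ : Fin n => νG n θ)
    (fun ys => Real.sqrt n * ⨆ x : Fin m → ℝ,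
      |(∑ i : Fin n, α n (i.1 + 1) *
          Set.indicator {y : Fin m → ℝ | y ≤ x} (fun _ => (1 : ℝ)) (ys i)) -
        cdfm (νG n (tn n (extendVec n ys))) x|) p

/-- The `p`-quantile of the parametric Cramér–von-Mises statistic (with re-estimated
parameter) computed under i.i.d. observations with distribution `ν_n(θ)`. -/
def cvmQuantParam {m d : ℕ} (α : ℕ → ℕ → ℝ) (tn : ℕ → (ℕ → Fin m → ℝ) → Fin d → ℝ)
    (νG : ℕ → (Fin d → ℝ) → Measure (Fin m → ℝ))
    (hν : ∀ n θ, IsProbabilityMeasure (νG n θ)) (n : ℕ) (θ : Fin d → ℝ) (p : ℝ) : ℝ := by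
  haveI := hν n θ
  exact lowerQuantile (Measure.pi fun _ : Fin n => νG n θ)
    (fun ys => (n : ℝ) * ∫ x, ((∑ i : Fin n, α n (i.1 + 1) *
        Set.indicator {y : Fin m → ℝ | y ≤ x} (fun _ => (1 : ℝ)) (ys i)) -
          cdfm (νG n (tn n (extendVec n ys))) x) ^ 2
      ∂(νG n (tn n (extendVec n ys)))) p

/- ### Two-sample / Hadamard setting -/

/-- The supremum "distance" on `ℓ∞(A) × ℓ∞(B)`. -/
def supEDistP {A B : Type*} (f g : (A → ℝ) × (B → ℝ)) : ℝ≥0∞ :=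
  max (supEDist f.1 g.1) (supEDist f.2 g.2)

/-- The set `D(ℝ̄^m) × D(ℝ̄^s)` of pairs of distribution functions. -/
def cdfPairs (m s : ℕ) : Set (((Fin m → ℝ) → ℝ) × ((Fin s → ℝ) → ℝ)) :=
  {K | IsCDF K.1 ∧ IsCDF K.2}

/-- Continuity of a functional `D × D → D` w.r.t. the supremum metrics. -/
def SupContinuousOnPairs {A B C : Type*}
    (T : ((A → ℝ) × (B → ℝ)) → (C → ℝ)) (D : Set ((A → ℝ) × (B → ℝ))) : Prop :=
  ∀ K ∈ D, ∀ ε > (0 : ℝ), ∃ δ > (0 : ℝ), ∀ L ∈ D,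
    supEDistP K L < ENNReal.ofReal δ → supEDist (T K) (T L) < ENNReal.ofReal ε

/-- Continuity of a functional `D × D → D × D` w.r.t. the supremum metrics. -/
def SupContinuousOnPairs2 {A B : Type*}
    (j : ((A → ℝ) × (B → ℝ)) → ((A → ℝ) × (B → ℝ))) (D : Set ((A → ℝ) × (B → ℝ))) : Prop :=
  ∀ K ∈ D, ∀ ε > (0 : ℝ), ∃ δ > (0 : ℝ), ∀ L ∈ D,
    supEDistP K L < ENNReal.ofReal δ → supEDistP (j K) (j L) < ENNReal.ofReal ε

/-- Uniform Hadamard differentiability of `T` at `K` with derivative `dT(K)`: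
`dT(K)` is linear and continuous w.r.t. the supremum metrics, and
`(T(K_n + t_n L_n) − T(K_n))/t_n → dT(K)(L)` uniformly whenever `K_n → K` uniformly in `D`,
`L_n → L ∈ ℓ∞ × ℓ∞` uniformly, `t_n ↓ 0` and `K_n + t_n L_n ∈ D`. -/
def UniformHadamardAt {A B C : Type*}
    (T : ((A → ℝ) × (B → ℝ)) → (C → ℝ)) (D : Set ((A → ℝ) × (B → ℝ)))
    (K : (A → ℝ) × (B → ℝ)) (dT : ((A → ℝ) × (B → ℝ)) → (C → ℝ)) : Prop :=
  (∀ L L', dT (L + L') = dT L + dT L') ∧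
  (∀ (c : ℝ) L, dT (c • L) = c • dT L) ∧
  (∀ ε > (0 : ℝ), ∃ δ > (0 : ℝ), ∀ L, supEDistP L 0 < ENNReal.ofReal δ →
      supEDist (dT L) 0 < ENNReal.ofReal ε) ∧
  (∀ (Kn Ln : ℕ → (A → ℝ) × (B → ℝ)) (L : (A → ℝ) × (B → ℝ)) (tn : ℕ → ℝ),
    (∀ n, Kn n ∈ D) →
    Tendsto (fun n => supEDistP (Kn n) K) atTop (𝓝 0) →
    (∃ C, (∀ a, |L.1 a| ≤ C) ∧ ∀ b, |L.2 b| ≤ C) →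
    Tendsto (fun n => supEDistP (Ln n) L) atTop (𝓝 0) →
    (∀ n, 0 < tn n) → Tendsto tn atTop (𝓝 0) →
    (∀ n, Kn n + tn n • Ln n ∈ D) →
    Tendsto (fun n => supEDist
      (fun z => (T (Kn n + tn n • Ln n) z - T (Kn n) z) / tn n) (dT L)) atTop (𝓝 0))

/-- The pair of weighted empirical distribution functions of the two samples. -/
def empPair {Ω : Type*} {m s : ℕ} (αw βw : ℕ → ℕ → ℝ) (X : ℕ → Ω → Fin m → ℝ)
    (V : ℕ → Ω → Fin s → ℝ) (N : ℕ × ℕ) (ω : Ω) :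
    ((Fin m → ℝ) → ℝ) × ((Fin s → ℝ) → ℝ) :=
  (empCDF αw X N.1 ω, empCDF βw V N.2 ω)

/-- The pair of mixture distribution functions `(𝔽_n, 𝔾_r)` of the two samples. -/
def mixPair {Ω : Type*} [MeasurableSpace Ω] {m s : ℕ} (P : Measure Ω)
    (αw βw : ℕ → ℕ → ℝ) (X : ℕ → Ω → Fin m → ℝ) (V : ℕ → Ω → Fin s → ℝ) (N : ℕ × ℕ) :
    ((Fin m → ℝ) → ℝ) × ((Fin s → ℝ) → ℝ) :=
  (mixCDF P αw X N.1, mixCDF P βw V N.2)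

end


section CdfmBasic

variable {m : ℕ} (μ ν : Measure (Fin m → ℝ))

lemma cdfm_eq_Iic (x : Fin m → ℝ) : cdfm μ x = (μ (Set.Iic x)).toReal := rfl

lemma cdfm_nonneg (x : Fin m → ℝ) : 0 ≤ cdfm μ x := ENNReal.toReal_nonneg

lemma cdfm_le_one [IsProbabilityMeasure μ] (x : Fin m → ℝ) : cdfm μ x ≤ 1 := by
  simpa [cdfm] using ENNReal.toReal_mono ENNReal.one_ne_top (prob_le_one (μ := μ) (s := {y | y ≤ x}))

lemma cdfm_mono [IsFiniteMeasure μ] {x y : Fin m → ℝ} (h : x ≤ y) : cdfm μ x ≤ cdfm μ y :=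
  ENNReal.toReal_mono (measure_ne_top _ _) (measure_mono (Set.Iic_subset_Iic.2 h))

lemma measurableSet_pi_Iic (x : Fin m → ℝ) : MeasurableSet (Set.Iic x) := by
  have : Set.Iic x = ⋂ j, (fun y : Fin m → ℝ => y j) ⁻¹' (Set.Iic (x j)) := by
    ext y; simp [Set.Iic, Pi.le_def]
  rw [this]
  exact MeasurableSet.iInter fun j => (measurable_pi_apply j) measurableSet_Iic

lemma measurableSet_pi_Ici (x : Fin m → ℝ) : MeasurableSet (Set.Ici x) := by
  have : Set.Ici x = ⋂ j, (fun y : Fin m → ℝ => y j) ⁻¹' (Set.Ici (x j)) := by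
    ext y; simp [Set.Ici, Pi.le_def]
  rw [this]
  exact MeasurableSet.iInter fun j => (measurable_pi_apply j) measurableSet_Ici

lemma isOpen_cdfm_lt [IsFiniteMeasure μ] (c : ℝ) : IsOpen {x | cdfm μ x < c} := by
  rw [Metric.isOpen_iff]
  intro x hx
  have hmono : Antitone (fun k : ℕ => Set.Iic (fun j => x j + ((k : ℝ) + 1)⁻¹)) := by
    intro k l hkl
    apply Set.Iic_subset_Iic.2
    intro j
    have : ((l : ℝ) + 1)⁻¹ ≤ ((k : ℝ) + 1)⁻¹ := by
      apply inv_anti₀ (by positivity) (by exact_mod_cast Nat.add_le_add_right hkl 1)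
    linarith
  have hinter : (⋂ k : ℕ, Set.Iic (fun j => x j + ((k : ℝ) + 1)⁻¹)) = Set.Iic x := by
    apply Set.Subset.antisymm
    · intro y hy
      simp only [Set.mem_iInter, Set.mem_Iic] at hy ⊢
      intro j
      have hlim : Tendsto (fun k : ℕ => x j + ((k : ℝ) + 1)⁻¹) atTop (𝓝 (x j)) := by
        have h0 : Tendsto (fun k : ℕ => ((k : ℝ) + 1)⁻¹) atTop (𝓝 0) := by
          simpa only [one_div] using tendsto_one_div_add_atTop_nhds_zero_nat (𝕜 := ℝ)
        simpa using (tendsto_const_nhds (x := x j)).add h0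
      exact ge_of_tendsto hlim (Eventually.of_forall fun k => hy k j)
    · intro y hy
      simp only [Set.mem_iInter, Set.mem_Iic] at hy ⊢
      intro k j
      have := hy j
      have : y j ≤ x j := hy j
      have hpos : (0:ℝ) < ((k : ℝ) + 1)⁻¹ := by positivity
      linarith
  have htends : Tendsto (fun k : ℕ => (μ (Set.Iic (fun j => x j + ((k : ℝ) + 1)⁻¹))).toReal)
      atTop (𝓝 (cdfm μ x)) := by
    have h1 := tendsto_measure_iInter_atTop
      (fun k => (measurableSet_pi_Iic _).nullMeasurableSet) hmono ⟨0, measure_ne_top μ _⟩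
    rw [hinter] at h1
    exact (ENNReal.tendsto_toReal (measure_ne_top _ _)).comp h1
  have hev := htends.eventually_lt_const hx
  obtain ⟨k, hk⟩ := hev.exists
  refine ⟨((k : ℝ) + 1)⁻¹, by positivity, ?_⟩
  intro y hy
  simp only [Set.mem_setOf_eq]
  have hle : cdfm μ y ≤ (μ (Set.Iic (fun j => x j + ((k : ℝ) + 1)⁻¹))).toReal := by
    rw [cdfm_eq_Iic]
    apply ENNReal.toReal_mono (measure_ne_top _ _)
    apply measure_mono
    apply Set.Iic_subset_Iic.2
    intro j
    have := dist_le_pi_dist y x j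
    rw [Metric.mem_ball] at hy
    have : |y j - x j| ≤ dist y x := by rw [← Real.dist_eq]; exact dist_le_pi_dist y x j
    have h2 : dist y x < ((k : ℝ) + 1)⁻¹ := hy
    have := abs_le.1 this
    linarith [this.2]
  exact lt_of_le_of_lt hle hk

lemma measurable_cdfm [IsFiniteMeasure μ] : Measurable (cdfm μ) := by
  apply measurable_of_Iio
  intro c
  exact (isOpen_cdfm_lt μ c).measurableSet

end CdfmBasic

section Compare

variable {m : ℕ}

lemma cmp_of_iUnion_quadrants (μ ν : Measure (Fin m → ℝ))
    [IsProbabilityMeasure μ] [IsProbabilityMeasure ν]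
    {d : ℝ} (h : ∀ x, |cdfm μ x - cdfm ν x| ≤ d) (x : ℕ → Fin m → ℝ)
    (hmono : Monotone x) {A : Set (Fin m → ℝ)} (hA : (⋃ k, Set.Iic (x k)) = A) :
    |(μ A).toReal - (ν A).toReal| ≤ d := by
  subst hA
  have hmono' : Monotone (fun k => Set.Iic (x k)) := fun a b hab => Set.Iic_subset_Iic.2 (hmono hab)
  have h1 : Tendsto (fun k => (μ (Set.Iic (x k))).toReal) atTop
      (𝓝 ((μ (⋃ k, Set.Iic (x k))).toReal)) :=
    (ENNReal.tendsto_toReal (measure_ne_top μ _)).comp (tendsto_measure_iUnion_atTop hmono')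
  have h2 : Tendsto (fun k => (ν (Set.Iic (x k))).toReal) atTop
      (𝓝 ((ν (⋃ k, Set.Iic (x k))).toReal)) :=
    (ENNReal.tendsto_toReal (measure_ne_top ν _)).comp (tendsto_measure_iUnion_atTop hmono')
  exact le_of_tendsto ((h1.sub h2).abs) (Eventually.of_forall fun k => h (x k))

lemma cmp_slab (μ ν : Measure (Fin m → ℝ))
    [IsProbabilityMeasure μ] [IsProbabilityMeasure ν]
    {d : ℝ} (h : ∀ x, |cdfm μ x - cdfm ν x| ≤ d) (j₀ : Fin m) (c : ℝ) :
    |(μ {y | y j₀ ≤ c}).toReal - (ν {y | y j₀ ≤ c}).toReal| ≤ d := by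
  classical
  apply cmp_of_iUnion_quadrants μ ν h (fun k j => if j = j₀ then c else (k : ℝ))
  · intro k l hkl j
    by_cases hj : j = j₀ <;> simp [hj, Nat.cast_le.2 hkl]
  · apply Set.Subset.antisymm
    · intro y hy
      simp only [Set.mem_iUnion, Set.mem_Iic] at hy
      obtain ⟨k, hk⟩ := hy
      have := hk j₀
      simpa using this
    · intro y hy
      simp only [Set.mem_setOf_eq] at hy
      obtain ⟨k, hk⟩ := exists_nat_ge (∑ j, |y j|)
      simp only [Set.mem_iUnion, Set.mem_Iic]
      refine ⟨k, fun j => ?_⟩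
      by_cases hj : j = j₀
      · subst hj; simpa using hy
      · simp only [hj, if_false]
        calc y j ≤ |y j| := le_abs_self _
        _ ≤ ∑ j', |y j'| := Finset.single_le_sum (fun i _ => abs_nonneg (y i)) (Finset.mem_univ j)
        _ ≤ k := hk

lemma cmp_strict_inter (μ ν : Measure (Fin m → ℝ))
    [IsProbabilityMeasure μ] [IsProbabilityMeasure ν]
    {d : ℝ} (h : ∀ x, |cdfm μ x - cdfm ν x| ≤ d) (t : Finset (Fin m)) (v : Fin m → ℝ) :
    |(μ {z | ∀ j ∈ t, z j < v j}).toReal - (ν {z | ∀ j ∈ t, z j < v j}).toReal| ≤ d := by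
  classical
  apply cmp_of_iUnion_quadrants μ ν h
    (fun k j => if j ∈ t then v j - ((k : ℝ) + 1)⁻¹ else (k : ℝ))
  · intro k l hkl j
    by_cases hj : j ∈ t
    · simp only [hj, if_true]
      have : ((l : ℝ) + 1)⁻¹ ≤ ((k : ℝ) + 1)⁻¹ :=
        inv_anti₀ (by positivity) (by exact_mod_cast Nat.add_le_add_right hkl 1)
      linarith
    · simp [hj, Nat.cast_le.2 hkl]
  · apply Set.Subset.antisymm
    · intro y hy
      simp only [Set.mem_iUnion, Set.mem_Iic] at hy
      obtain ⟨k, hk⟩ := hy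
      intro j hj
      have := hk j
      simp only [hj, if_true] at this
      have hpos : (0:ℝ) < ((k : ℝ) + 1)⁻¹ := by positivity
      linarith
    · intro y hy
      simp only [Set.mem_setOf_eq] at hy
      simp only [Set.mem_iUnion, Set.mem_Iic]
      have hev : ∀ j : Fin m, ∀ᶠ k : ℕ in atTop,
          y j ≤ (if j ∈ t then v j - ((k : ℝ) + 1)⁻¹ else (k : ℝ)) := by
        intro j
        by_cases hj : j ∈ t
        · simp only [hj, if_true]
          have hlim : Tendsto (fun k : ℕ => v j - ((k : ℝ) + 1)⁻¹) atTop (𝓝 (v j - 0)) := by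
            apply (tendsto_const_nhds (x := v j)).sub
            simpa only [one_div] using tendsto_one_div_add_atTop_nhds_zero_nat (𝕜 := ℝ)
          rw [sub_zero] at hlim
          exact hlim.eventually_const_le (hy j hj)
        · simp only [hj, if_false]
          filter_upwards [eventually_ge_atTop (Nat.ceil (y j))] with k hk
          calc y j ≤ Nat.ceil (y j) := Nat.le_ceil _
          _ ≤ (k : ℝ) := by exact_mod_cast hk
      have := (eventually_all.2 hev).exists
      obtain ⟨k, hk⟩ := this
      exact ⟨k, fun j => hk j⟩

lemma cmp_Ici (μ ν : Measure (Fin m → ℝ))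
    [IsProbabilityMeasure μ] [IsProbabilityMeasure ν]
    {d : ℝ} (h : ∀ x, |cdfm μ x - cdfm ν x| ≤ d) (v : Fin m → ℝ) :
    |(μ (Set.Ici v)).toReal - (ν (Set.Ici v)).toReal| ≤ 2 ^ m * d := by
  classical
  set A : Finset (Fin m) → Set (Fin m → ℝ) := fun t => {z | ∀ j ∈ t, z j < v j} with hA
  have hAmeas : ∀ t, MeasurableSet (A t) := by
    intro t
    have : A t = ⋂ j ∈ t, (fun z : Fin m → ℝ => z j) ⁻¹' (Set.Iio (v j)) := by
      ext z; simp [hA]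
    rw [this]
    exact MeasurableSet.biInter t.countable_toSet
      (fun j _ => (measurable_pi_apply j) measurableSet_Iio)
  -- pointwise identity of indicators
  have hpt : ∀ ρ : Measure (Fin m → ℝ), IsProbabilityMeasure ρ →
      (ρ (Set.Ici v)).toReal
        = ∑ t ∈ (Finset.univ : Finset (Fin m)).powerset,
            (-1 : ℝ) ^ t.card * (ρ (A t)).toReal := by
    intro ρ hρ
    have key : ∀ z : Fin m → ℝ,
        Set.indicator (Set.Ici v) (fun _ => (1:ℝ)) z
          = ∑ t ∈ (Finset.univ : Finset (Fin m)).powerset,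
              (-1 : ℝ) ^ t.card * Set.indicator (A t) (fun _ => (1:ℝ)) z := by
      intro z
      have hprod : Set.indicator (Set.Ici v) (fun _ => (1:ℝ)) z
          = ∏ j : Fin m, ((-(Set.indicator {w : Fin m → ℝ | w j < v j} (fun _ => (1:ℝ)) z)) + 1) := by
        by_cases hz : z ∈ Set.Ici v
        · rw [Set.indicator_of_mem hz]
          rw [Finset.prod_eq_one]
          intro j _
          have : z ∉ {w : Fin m → ℝ | w j < v j} := by
            simp only [Set.mem_setOf_eq, not_lt]
            exact hz j
          rw [Set.indicator_of_notMem this]; ring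
        · rw [Set.indicator_of_notMem hz]
          have : ∃ j, z j < v j := by
            by_contra hcon
            push_neg at hcon
            exact hz (fun j => hcon j)
          obtain ⟨j, hj⟩ := this
          rw [eq_comm]
          apply Finset.prod_eq_zero (Finset.mem_univ j)
          rw [Set.indicator_of_mem (by simpa using hj)]; ring
        -- done
      rw [hprod, Finset.prod_add]
      apply Finset.sum_congr rfl
      intro t ht
      rw [Finset.prod_const_one, mul_one]
      have h1 : ∏ j ∈ t, (-(Set.indicator {w : Fin m → ℝ | w j < v j} (fun _ => (1:ℝ)) z))
          = (-1 : ℝ) ^ t.card *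
            ∏ j ∈ t, Set.indicator {w : Fin m → ℝ | w j < v j} (fun _ => (1:ℝ)) z := by
        rw [← Finset.prod_const (b := (-1 : ℝ)), ← Finset.prod_mul_distrib]
        apply Finset.prod_congr rfl
        intro j _; ring
      rw [h1]
      congr 1
      by_cases hz : z ∈ A t
      · rw [Set.indicator_of_mem hz]
        apply Finset.prod_eq_one
        intro j hj
        exact Set.indicator_of_mem (hz j hj) (fun _ => (1:ℝ))
      · rw [Set.indicator_of_notMem hz]
        simp only [hA, Set.mem_setOf_eq, not_forall] at hz
        obtain ⟨j, hj, hjlt⟩ := hz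
        apply Finset.prod_eq_zero hj
        exact Set.indicator_of_notMem (by simpa using hjlt) (fun _ => (1:ℝ))
    -- integrate the pointwise identity
    have hint : ∀ s : Set (Fin m → ℝ), MeasurableSet s →
        Integrable (Set.indicator s (fun _ => (1:ℝ))) ρ :=
      fun s hs => (integrable_const (1:ℝ)).indicator hs
    have := hρ
    calc (ρ (Set.Ici v)).toReal
        = ∫ z, Set.indicator (Set.Ici v) (fun _ => (1:ℝ)) z ∂ρ := by
          rw [integral_indicator_const (1:ℝ) (measurableSet_pi_Ici v), smul_eq_mul, mul_one]; rfl
      _ = ∫ z, ∑ t ∈ (Finset.univ : Finset (Fin m)).powerset,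
            (-1 : ℝ) ^ t.card * Set.indicator (A t) (fun _ => (1:ℝ)) z ∂ρ := by
          exact integral_congr_ae (Eventually.of_forall key)
      _ = ∑ t ∈ (Finset.univ : Finset (Fin m)).powerset,
            (-1 : ℝ) ^ t.card * (ρ (A t)).toReal := by
          rw [integral_finset_sum]
          · apply Finset.sum_congr rfl
            intro t ht
            rw [integral_const_mul, integral_indicator_const (1:ℝ) (hAmeas t), smul_eq_mul, mul_one]; rfl
          · intro t ht
            exact ((hint (A t) (hAmeas t))).const_mul _
  rw [hpt μ inferInstance, hpt ν inferInstance, ← Finset.sum_sub_distrib]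
  calc |∑ t ∈ (Finset.univ : Finset (Fin m)).powerset,
        ((-1 : ℝ) ^ t.card * (μ (A t)).toReal - (-1 : ℝ) ^ t.card * (ν (A t)).toReal)|
      ≤ ∑ t ∈ (Finset.univ : Finset (Fin m)).powerset,
        |(-1 : ℝ) ^ t.card * (μ (A t)).toReal - (-1 : ℝ) ^ t.card * (ν (A t)).toReal| :=
        Finset.abs_sum_le_sum_abs _ _
    _ ≤ ∑ t ∈ (Finset.univ : Finset (Fin m)).powerset, d := by
        apply Finset.sum_le_sum
        intro t ht
        rw [← mul_sub, abs_mul, abs_pow, abs_neg, abs_one, one_pow, one_mul]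
        exact cmp_strict_inter μ ν h t v
    _ = 2 ^ m * d := by
        rw [Finset.sum_const, Finset.card_powerset, Finset.card_univ, Fintype.card_fin,
          nsmul_eq_mul]
        norm_num

end Compare

section IntegralCmp

variable {u : ℕ}

lemma integrable_of_bounded' {α : Type*} [MeasurableSpace α] (ρ : Measure α) [IsFiniteMeasure ρ]
    {f : α → ℝ} (hf : AEStronglyMeasurable f ρ) {C : ℝ} (hC : ∀ z, |f z| ≤ C) :
    Integrable f ρ :=
  Integrable.mono' (integrable_const C) hf (ae_of_all _ hC)

lemma measurable_sup_pair :
    Measurable (fun p : (Fin u → ℝ) × (Fin u → ℝ) => p.1 ⊔ p.2) := by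
  apply measurable_pi_lambda
  intro j
  exact ((measurable_pi_apply j).comp measurable_fst).max
    ((measurable_pi_apply j).comp measurable_snd)

lemma measurableSet_le_pair :
    MeasurableSet {p : (Fin u → ℝ) × (Fin u → ℝ) | p.2 ≤ p.1} := by
  have : {p : (Fin u → ℝ) × (Fin u → ℝ) | p.2 ≤ p.1}
      = ⋂ j, {p : (Fin u → ℝ) × (Fin u → ℝ) | p.2 j ≤ p.1 j} := by
    ext p; simp [Pi.le_def]
  rw [this]
  exact MeasurableSet.iInter fun j =>
    measurableSet_le (measurable_snd.eval) (measurable_fst.eval)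

lemma integral_cdfm_mul (a b μ : Measure (Fin u → ℝ))
    [IsProbabilityMeasure a] [IsProbabilityMeasure b] [IsProbabilityMeasure μ] :
    ∫ z, cdfm a z * cdfm b z ∂μ
      = (∫⁻ w, μ (Set.Ici w) ∂((a.prod b).map (fun p => p.1 ⊔ p.2))).toReal := by
  set ρ := (a.prod b).map (fun p : (Fin u → ℝ) × (Fin u → ℝ) => p.1 ⊔ p.2) with hρdef
  haveI : IsProbabilityMeasure ρ := Measure.isProbabilityMeasure_map measurable_sup_pair.aemeasurable
  have hpt : ∀ z, cdfm a z * cdfm b z = (ρ (Set.Iic z)).toReal := by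
    intro z
    rw [hρdef, Measure.map_apply measurable_sup_pair (measurableSet_pi_Iic z)]
    have hpre : (fun p : (Fin u → ℝ) × (Fin u → ℝ) => p.1 ⊔ p.2) ⁻¹' (Set.Iic z)
        = (Set.Iic z) ×ˢ (Set.Iic z) := by
      ext p
      simp [Set.mem_preimage, Set.mem_Iic, sup_le_iff, Set.mem_prod, Prod.le_def]
    rw [hpre, Measure.prod_prod, ENNReal.toReal_mul]
    rfl
  have hswap : ∫⁻ z, ρ (Set.Iic z) ∂μ = ∫⁻ w, μ (Set.Ici w) ∂ρ := by
    have hS := measurableSet_le_pair (u := u)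
    have hind : AEMeasurable (Function.uncurry
        (fun z w : Fin u → ℝ => Set.indicator {p : (Fin u → ℝ) × (Fin u → ℝ) | p.2 ≤ p.1}
          (fun _ => (1:ℝ≥0∞)) (z, w))) (μ.prod ρ) := by
      have : (Function.uncurry
        (fun z w : Fin u → ℝ => Set.indicator {p : (Fin u → ℝ) × (Fin u → ℝ) | p.2 ≤ p.1}
          (fun _ => (1:ℝ≥0∞)) (z, w)))
          = Set.indicator {p : (Fin u → ℝ) × (Fin u → ℝ) | p.2 ≤ p.1} (fun _ => (1:ℝ≥0∞)) := by
        funext p; cases p; rfl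
      rw [this]
      exact ((measurable_const (a := (1:ℝ≥0∞))).indicator hS).aemeasurable
    calc ∫⁻ z, ρ (Set.Iic z) ∂μ
        = ∫⁻ z, ∫⁻ w, Set.indicator {p : (Fin u → ℝ) × (Fin u → ℝ) | p.2 ≤ p.1}
            (fun _ => (1:ℝ≥0∞)) (z, w) ∂ρ ∂μ := by
          apply lintegral_congr
          intro z
          have : (fun w => Set.indicator {p : (Fin u → ℝ) × (Fin u → ℝ) | p.2 ≤ p.1}
              (fun _ => (1:ℝ≥0∞)) (z, w)) = Set.indicator (Set.Iic z) (fun _ => (1:ℝ≥0∞)) := by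
            funext w
            by_cases hw : w ≤ z
            · rw [Set.indicator_of_mem (by simpa using hw),
                Set.indicator_of_mem (by simpa using hw)]
            · rw [Set.indicator_of_notMem (by simpa using hw),
                Set.indicator_of_notMem (by simpa using hw)]
          rw [this]
          rw [lintegral_indicator_const (measurableSet_pi_Iic z), one_mul]
      _ = ∫⁻ w, ∫⁻ z, Set.indicator {p : (Fin u → ℝ) × (Fin u → ℝ) | p.2 ≤ p.1}
            (fun _ => (1:ℝ≥0∞)) (z, w) ∂μ ∂ρ := lintegral_lintegral_swap hind
      _ = ∫⁻ w, μ (Set.Ici w) ∂ρ := by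
          apply lintegral_congr
          intro w
          have : (fun z => Set.indicator {p : (Fin u → ℝ) × (Fin u → ℝ) | p.2 ≤ p.1}
              (fun _ => (1:ℝ≥0∞)) (z, w)) = Set.indicator (Set.Ici w) (fun _ => (1:ℝ≥0∞)) := by
            funext z
            by_cases hw : w ≤ z
            · rw [Set.indicator_of_mem (by simpa using hw),
                Set.indicator_of_mem (by simpa using hw)]
            · rw [Set.indicator_of_notMem (by simpa using hw),
                Set.indicator_of_notMem (by simpa using hw)]
          rw [this]
          rw [lintegral_indicator_const (measurableSet_pi_Ici w), one_mul]
  have hmeas : AEMeasurable (fun z => ρ (Set.Iic z)) μ := by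
    have : (fun z => ρ (Set.Iic z)) = fun z => ENNReal.ofReal (cdfm ρ z) := by
      funext z
      rw [cdfm_eq_Iic, ENNReal.ofReal_toReal (measure_ne_top _ _)]
    rw [this]
    exact ((measurable_cdfm ρ).ennreal_ofReal).aemeasurable
  calc ∫ z, cdfm a z * cdfm b z ∂μ
      = ∫ z, (ρ (Set.Iic z)).toReal ∂μ := by
        apply integral_congr_ae (Eventually.of_forall hpt)
    _ = (∫⁻ z, ρ (Set.Iic z) ∂μ).toReal := by
        rw [integral_toReal hmeas (ae_of_all _ fun z => measure_lt_top _ _)]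
    _ = (∫⁻ w, μ (Set.Ici w) ∂ρ).toReal := by rw [hswap]

lemma integral_cdfm_mul_cmp (a b μ ν : Measure (Fin u → ℝ))
    [IsProbabilityMeasure a] [IsProbabilityMeasure b]
    [IsProbabilityMeasure μ] [IsProbabilityMeasure ν]
    {d : ℝ} (h : ∀ x, |cdfm μ x - cdfm ν x| ≤ d) :
    |∫ z, cdfm a z * cdfm b z ∂μ - ∫ z, cdfm a z * cdfm b z ∂ν| ≤ 2 ^ u * d := by
  have hd : 0 ≤ d := le_trans (abs_nonneg _) (h 0)
  have he : (0:ℝ) ≤ 2 ^ u * d := by positivity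
  set ρ := (a.prod b).map (fun p : (Fin u → ℝ) × (Fin u → ℝ) => p.1 ⊔ p.2) with hρdef
  haveI : IsProbabilityMeasure ρ := Measure.isProbabilityMeasure_map measurable_sup_pair.aemeasurable
  rw [integral_cdfm_mul, integral_cdfm_mul]
  set Lμ := ∫⁻ w, μ (Set.Ici w) ∂ρ with hLμ
  set Lν := ∫⁻ w, ν (Set.Ici w) ∂ρ with hLν
  have hfin : ∀ (κ : Measure (Fin u → ℝ)), IsProbabilityMeasure κ →
      (∫⁻ w, κ (Set.Ici w) ∂ρ) ≤ 1 := by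
    intro κ hκ
    calc ∫⁻ w, κ (Set.Ici w) ∂ρ ≤ ∫⁻ _, 1 ∂ρ := lintegral_mono fun w => prob_le_one
    _ = 1 := by simp
  have hLμfin : Lμ ≠ ⊤ := ne_top_of_le_ne_top ENNReal.one_ne_top (hfin μ inferInstance)
  have hLνfin : Lν ≠ ⊤ := ne_top_of_le_ne_top ENNReal.one_ne_top (hfin ν inferInstance)
  have key : ∀ (κ₁ κ₂ : Measure (Fin u → ℝ)) (h₁ : IsProbabilityMeasure κ₁)
      (h₂ : IsProbabilityMeasure κ₂),
      (∀ x, |cdfm κ₁ x - cdfm κ₂ x| ≤ d) →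
      (∫⁻ w, κ₁ (Set.Ici w) ∂ρ) ≤ (∫⁻ w, κ₂ (Set.Ici w) ∂ρ) + ENNReal.ofReal (2 ^ u * d) := by
    intro κ₁ κ₂ h₁ h₂ hcmp
    have hpt : ∀ w, κ₁ (Set.Ici w) ≤ κ₂ (Set.Ici w) + ENNReal.ofReal (2 ^ u * d) := by
      intro w
      have := cmp_Ici κ₁ κ₂ hcmp w
      have h3 : (κ₁ (Set.Ici w)).toReal ≤ (κ₂ (Set.Ici w)).toReal + 2 ^ u * d := by
        have := abs_le.1 this
        linarith [this.1, this.2]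
      calc κ₁ (Set.Ici w) = ENNReal.ofReal ((κ₁ (Set.Ici w)).toReal) := by
            rw [ENNReal.ofReal_toReal (measure_ne_top _ _)]
        _ ≤ ENNReal.ofReal ((κ₂ (Set.Ici w)).toReal + 2 ^ u * d) := ENNReal.ofReal_le_ofReal h3
        _ = ENNReal.ofReal ((κ₂ (Set.Ici w)).toReal) + ENNReal.ofReal (2 ^ u * d) :=
            ENNReal.ofReal_add ENNReal.toReal_nonneg he
        _ = κ₂ (Set.Ici w) + ENNReal.ofReal (2 ^ u * d) := by
            rw [ENNReal.ofReal_toReal (measure_ne_top _ _)]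
    calc ∫⁻ w, κ₁ (Set.Ici w) ∂ρ
        ≤ ∫⁻ w, (κ₂ (Set.Ici w) + ENNReal.ofReal (2 ^ u * d)) ∂ρ := lintegral_mono hpt
      _ = (∫⁻ w, κ₂ (Set.Ici w) ∂ρ) + ENNReal.ofReal (2 ^ u * d) := by
          rw [lintegral_add_right _ measurable_const]
          simp
  have h1 := key μ ν inferInstance inferInstance h
  have h2 := key ν μ inferInstance inferInstance (fun x => by rw [abs_sub_comm]; exact h x)
  rw [abs_le]
  constructor
  · have := ENNReal.toReal_mono (by
      exact ENNReal.add_ne_top.2 ⟨hLμfin, ENNReal.ofReal_ne_top⟩) h2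
    rw [ENNReal.toReal_add hLμfin ENNReal.ofReal_ne_top, ENNReal.toReal_ofReal he] at this
    linarith
  · have := ENNReal.toReal_mono (by
      exact ENNReal.add_ne_top.2 ⟨hLνfin, ENNReal.ofReal_ne_top⟩) h1
    rw [ENNReal.toReal_add hLνfin ENNReal.ofReal_ne_top, ENNReal.toReal_ofReal he] at this
    linarith

lemma integrable_cdfm_mul (a b ρ : Measure (Fin u → ℝ))
    [IsProbabilityMeasure a] [IsProbabilityMeasure b] [IsProbabilityMeasure ρ] :
    Integrable (fun z => cdfm a z * cdfm b z) ρ := by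
  apply integrable_of_bounded' ρ (((measurable_cdfm a).mul (measurable_cdfm b)).aestronglyMeasurable)
    (C := 1)
  intro z
  rw [Pi.mul_apply, abs_mul]
  have h1 : |cdfm a z| ≤ 1 := by
    rw [abs_of_nonneg (cdfm_nonneg a z)]; exact cdfm_le_one a z
  have h2 : |cdfm b z| ≤ 1 := by
    rw [abs_of_nonneg (cdfm_nonneg b z)]; exact cdfm_le_one b z
  nlinarith [abs_nonneg (cdfm a z), abs_nonneg (cdfm b z)]

lemma integral_sq_sub_cmp (a b μ ν : Measure (Fin u → ℝ))
    [IsProbabilityMeasure a] [IsProbabilityMeasure b]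
    [IsProbabilityMeasure μ] [IsProbabilityMeasure ν]
    {d : ℝ} (h : ∀ x, |cdfm μ x - cdfm ν x| ≤ d) :
    |∫ z, (cdfm a z - cdfm b z) ^ 2 ∂μ - ∫ z, (cdfm a z - cdfm b z) ^ 2 ∂ν|
      ≤ 4 * 2 ^ u * d := by
  have expand : ∀ (ρ : Measure (Fin u → ℝ)), IsProbabilityMeasure ρ →
      ∫ z, (cdfm a z - cdfm b z) ^ 2 ∂ρ
        = ∫ z, cdfm a z * cdfm a z ∂ρ - 2 * ∫ z, cdfm a z * cdfm b z ∂ρ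
          + ∫ z, cdfm b z * cdfm b z ∂ρ := by
    intro ρ hρ
    have haa := integrable_cdfm_mul a a ρ
    have hab := integrable_cdfm_mul a b ρ
    have hbb := integrable_cdfm_mul b b ρ
    have hsub : Integrable (fun z => cdfm a z * cdfm a z - 2 * (cdfm a z * cdfm b z)) ρ :=
      haa.sub (hab.const_mul 2)
    calc ∫ z, (cdfm a z - cdfm b z) ^ 2 ∂ρ
        = ∫ z, (cdfm a z * cdfm a z - 2 * (cdfm a z * cdfm b z) + cdfm b z * cdfm b z) ∂ρ := by
          apply integral_congr_ae (ae_of_all _ fun z => by ring)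
      _ = ∫ z, (cdfm a z * cdfm a z - 2 * (cdfm a z * cdfm b z)) ∂ρ
            + ∫ z, cdfm b z * cdfm b z ∂ρ := by
          rw [integral_add hsub hbb]
      _ = ∫ z, cdfm a z * cdfm a z ∂ρ - 2 * ∫ z, cdfm a z * cdfm b z ∂ρ
            + ∫ z, cdfm b z * cdfm b z ∂ρ := by
          rw [integral_sub haa (hab.const_mul 2), integral_const_mul]
  rw [expand μ inferInstance, expand ν inferInstance]
  have h1 := abs_le.1 (integral_cdfm_mul_cmp a a μ ν h)
  have h2 := abs_le.1 (integral_cdfm_mul_cmp a b μ ν h)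
  have h3 := abs_le.1 (integral_cdfm_mul_cmp b b μ ν h)
  rw [abs_le]
  constructor <;> nlinarith [h1.1, h1.2, h2.1, h2.2, h3.1, h3.2]

end IntegralCmp

section Weights

variable {αw : ℕ → ℕ → ℝ} {κ : ℝ}

lemma weights_le_one (hα : WeightsOK αw κ) {n i : ℕ} (hi : i ∈ Finset.Icc 1 n) :
    αw n i ≤ 1 := by
  have h1 : 1 ≤ n := by
    rw [Finset.mem_Icc] at hi; omega
  calc αw n i ≤ ∑ j ∈ Finset.Icc 1 n, αw n j :=
    Finset.single_le_sum (fun j hj => hα.1 n j hj) hi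
  _ = 1 := hα.2.1 n h1

lemma maxalpha_nonneg (hα : WeightsOK αw κ) (n : ℕ) :
    0 ≤ ⨆ i ∈ Finset.Icc 1 n, αw n i :=
  Real.iSup_nonneg fun i => Real.iSup_nonneg fun hi => hα.1 n i hi

lemma le_maxalpha (hα : WeightsOK αw κ) {n i : ℕ} (hi : i ∈ Finset.Icc 1 n) :
    αw n i ≤ ⨆ j ∈ Finset.Icc 1 n, αw n j := by
  have hbdd : BddAbove (Set.range fun j => ⨆ _ : j ∈ Finset.Icc 1 n, αw n j) := by
    refine ⟨1, ?_⟩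
    rintro y ⟨j, rfl⟩
    show (⨆ _ : j ∈ Finset.Icc 1 n, αw n j) ≤ 1
    by_cases hj : j ∈ Finset.Icc 1 n
    · rw [(ciSup_pos hj : (⨆ _ : j ∈ Finset.Icc 1 n, αw n j) = αw n j)]
      exact weights_le_one hα hj
    · haveI : IsEmpty (j ∈ Finset.Icc 1 n) := ⟨fun h => hj h⟩
      rw [Real.iSup_of_isEmpty]
      norm_num
  calc αw n i = ⨆ _ : i ∈ Finset.Icc 1 n, αw n i :=
        (ciSup_pos hi : (⨆ _ : i ∈ Finset.Icc 1 n, αw n i) = αw n i).symm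
  _ ≤ ⨆ j ∈ Finset.Icc 1 n, αw n j := le_ciSup hbdd i

lemma maxalpha_tendsto (hα : WeightsOK αw κ) :
    Tendsto (fun n => ⨆ i ∈ Finset.Icc 1 n, αw n i) atTop (𝓝 0) := by
  apply tendsto_of_tendsto_of_tendsto_of_le_of_le' tendsto_const_nhds hα.2.2.1
  · exact Eventually.of_forall fun n => maxalpha_nonneg hα n
  · filter_upwards [eventually_ge_atTop 1] with n hn
    apply le_mul_of_one_le_left (maxalpha_nonneg hα n)
    have : Real.sqrt 1 ≤ Real.sqrt n := Real.sqrt_le_sqrt (by exact_mod_cast hn)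
    rwa [Real.sqrt_one] at this

lemma sumsq_tendsto (hα : WeightsOK αw κ) :
    Tendsto (fun n => ∑ i ∈ Finset.Icc 1 n, (αw n i) ^ 2) atTop (𝓝 0) := by
  have h1 : Tendsto (fun n : ℕ => ((n : ℝ) * ∑ i ∈ Finset.Icc 1 n, (αw n i) ^ 2) * (n : ℝ)⁻¹)
      atTop (𝓝 (κ * 0)) := hα.2.2.2.1.mul tendsto_inv_atTop_nhds_zero_nat
  rw [mul_zero] at h1
  apply h1.congr'
  filter_upwards [eventually_ge_atTop 1] with n hn
  have : (n : ℝ) ≠ 0 := by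
    have h1 : (1:ℝ) ≤ n := by exact_mod_cast hn
    linarith
  field_simp

lemma wavg_tendsto (hα : WeightsOK αw κ) {s : ℕ → ℝ} (h0 : ∀ i, 0 ≤ s i) (h1 : ∀ i, s i ≤ 1)
    (hs : Tendsto s atTop (𝓝 0)) :
    Tendsto (fun n => ∑ i ∈ Finset.Icc 1 n, αw n i * s i) atTop (𝓝 0) := by
  classical
  rw [Metric.tendsto_atTop]
  intro ε hε
  obtain ⟨M, hM⟩ := (Metric.tendsto_atTop.1 hs) (ε / 4) (by positivity)
  obtain ⟨N1, hN1⟩ := (Metric.tendsto_atTop.1 (maxalpha_tendsto hα))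
    (ε / (4 * (M + 1))) (by positivity)
  refine ⟨max N1 1, fun n hn => ?_⟩
  have hn1 : 1 ≤ n := le_trans (le_max_right _ _) hn
  have hnN1 : N1 ≤ n := le_trans (le_max_left _ _) hn
  have hnonneg : 0 ≤ ∑ i ∈ Finset.Icc 1 n, αw n i * s i :=
    Finset.sum_nonneg fun i hi => mul_nonneg (hα.1 n i hi) (h0 i)
  rw [Real.dist_eq, sub_zero, abs_of_nonneg hnonneg]
  have hmax : (⨆ i ∈ Finset.Icc 1 n, αw n i) < ε / (4 * (M + 1)) := by
    have := hN1 n hnN1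
    rw [Real.dist_eq, sub_zero, abs_of_nonneg (maxalpha_nonneg hα n)] at this
    exact this
  have hsplit := Finset.sum_filter_add_sum_filter_not (Finset.Icc 1 n) (fun i => i < M)
    (fun i => αw n i * s i)
  rw [← hsplit]
  have hb1 : ∑ i ∈ (Finset.Icc 1 n).filter (fun i => i < M), αw n i * s i ≤ ε / 4 := by
    calc ∑ i ∈ (Finset.Icc 1 n).filter (fun i => i < M), αw n i * s i
        ≤ ∑ _i ∈ (Finset.Icc 1 n).filter (fun i => i < M), ε / (4 * (M + 1)) := by
          apply Finset.sum_le_sum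
          intro i hi
          rw [Finset.mem_filter] at hi
          calc αw n i * s i ≤ αw n i * 1 :=
            mul_le_mul_of_nonneg_left (h1 i) (hα.1 n i hi.1)
          _ = αw n i := mul_one _
          _ ≤ ⨆ j ∈ Finset.Icc 1 n, αw n j := le_maxalpha hα hi.1
          _ ≤ ε / (4 * (M + 1)) := le_of_lt hmax
      _ = ((Finset.Icc 1 n).filter (fun i => i < M)).card * (ε / (4 * (M + 1))) := by
          rw [Finset.sum_const, nsmul_eq_mul]
      _ ≤ (M : ℝ) * (ε / (4 * (M + 1))) := by
          apply mul_le_mul_of_nonneg_right _ (by positivity)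
          have hsub : (Finset.Icc 1 n).filter (fun i => i < M) ⊆ Finset.Ico 1 M := by
            intro i hi
            rw [Finset.mem_filter, Finset.mem_Icc] at hi
            rw [Finset.mem_Ico]
            omega
          calc (((Finset.Icc 1 n).filter (fun i => i < M)).card : ℝ)
              ≤ ((Finset.Ico 1 M).card : ℝ) := by exact_mod_cast Finset.card_le_card hsub
          _ ≤ M := by rw [Nat.card_Ico]; exact_mod_cast Nat.sub_le M 1
      _ ≤ ε / 4 := by
          have h4 : (M : ℝ) / (4 * (M + 1)) ≤ 1 / 4 := by
            rw [div_le_div_iff₀ (by positivity) (by norm_num)]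
            nlinarith [Nat.cast_nonneg (α := ℝ) M]
          calc (M:ℝ) * (ε / (4 * (M + 1))) = ((M:ℝ) / (4 * (M + 1))) * ε := by ring
          _ ≤ (1 / 4) * ε := mul_le_mul_of_nonneg_right h4 (le_of_lt hε)
          _ = ε / 4 := by ring
  have hb2 : ∑ i ∈ (Finset.Icc 1 n).filter (fun i => ¬ i < M), αw n i * s i ≤ ε / 4 := by
    calc ∑ i ∈ (Finset.Icc 1 n).filter (fun i => ¬ i < M), αw n i * s i
        ≤ ∑ i ∈ (Finset.Icc 1 n).filter (fun i => ¬ i < M), αw n i * (ε / 4) := by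
          apply Finset.sum_le_sum
          intro i hi
          rw [Finset.mem_filter, not_lt] at hi
          apply mul_le_mul_of_nonneg_left _ (hα.1 n i hi.1)
          have := hM i hi.2
          rw [Real.dist_eq, sub_zero] at this
          exact le_of_lt (lt_of_le_of_lt (le_abs_self _) this)
      _ = (∑ i ∈ (Finset.Icc 1 n).filter (fun i => ¬ i < M), αw n i) * (ε / 4) := by
          rw [Finset.sum_mul]
      _ ≤ 1 * (ε / 4) := by
          apply mul_le_mul_of_nonneg_right _ (by positivity)
          rw [← hα.2.1 n hn1]
          apply Finset.sum_le_sum_of_subset_of_nonneg (Finset.filter_subset _ _)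
          intro i hi _
          exact hα.1 n i hi
      _ = ε / 4 := one_mul _
  linarith

end Weights

section Cheb

variable {m : ℕ} {Ω : Type*} [MeasurableSpace Ω] (P : Measure Ω) [IsProbabilityMeasure P]
variable {X : ℕ → Ω → Fin m → ℝ} {αw : ℕ → ℕ → ℝ} {κ : ℝ}

lemma cheb_bound (hXmeas : ∀ i, Measurable (X i))
    (hXindep : iIndepFun X P) (hα : WeightsOK αw κ)
    {A : Set (Fin m → ℝ)} (hA : MeasurableSet A) (n : ℕ) {t : ℝ} (ht : 0 < t) :
    P {ω | t ≤ |∑ i ∈ Finset.Icc 1 n, αw n i *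
        (Set.indicator A (fun _ => (1:ℝ)) (X i ω) - (lawOf P X i A).toReal)|}
      ≤ ENNReal.ofReal ((∑ i ∈ Finset.Icc 1 n, (αw n i) ^ 2) / t ^ 2) := by
  classical
  haveI hlaw : ∀ i, IsProbabilityMeasure (lawOf P X i) := fun i =>
    Measure.isProbabilityMeasure_map (hXmeas i).aemeasurable
  set p : ℕ → ℝ := fun i => (lawOf P X i A).toReal with hp
  set Y : ℕ → Ω → ℝ := fun i ω => Set.indicator A (fun _ => (1:ℝ)) (X i ω) - p i with hY
  have hp0 : ∀ i, 0 ≤ p i := fun i => ENNReal.toReal_nonneg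
  have hp1 : ∀ i, p i ≤ 1 := fun i => by
    simpa using ENNReal.toReal_mono ENNReal.one_ne_top (prob_le_one (μ := lawOf P X i) (s := A))
  have hindmeas : Measurable (Set.indicator A (fun _ => (1:ℝ))) :=
    measurable_const.indicator hA
  have hYmeas : ∀ i, Measurable (Y i) := fun i =>
    ((hindmeas.comp (hXmeas i)).sub measurable_const)
  have hYb : ∀ i ω, |Y i ω| ≤ 1 := by
    intro i ω
    rw [hY]
    simp only [Set.indicator_apply]
    by_cases hx : X i ω ∈ A <;> simp [hx, abs_le] <;>
      constructor <;> linarith [hp0 i, hp1 i]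
  have hYint : ∀ i, Integrable (Y i) P := fun i =>
    integrable_of_bounded' P (hYmeas i).aestronglyMeasurable (hYb i)
  have hintind : ∀ i, Integrable (fun ω => Set.indicator A (fun _ => (1:ℝ)) (X i ω)) P := by
    intro i
    apply integrable_of_bounded' P (C := 1)
      ((hindmeas.comp (hXmeas i)).aestronglyMeasurable)
    intro ω
    show |Set.indicator A (fun _ => (1:ℝ)) (X i ω)| ≤ 1
    by_cases hx : X i ω ∈ A
    · rw [Set.indicator_of_mem hx]; norm_num
    · rw [Set.indicator_of_notMem hx]; norm_num
  have hY0 : ∀ i, ∫ ω, Y i ω ∂P = 0 := by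
    intro i
    have heq : ∫ ω, Y i ω ∂P
        = (∫ ω, Set.indicator A (fun _ => (1:ℝ)) (X i ω) ∂P) - p i := by
      rw [hY]
      rw [integral_sub (hintind i) (integrable_const _), integral_const]
      simp [measure_univ]
    have hmap : ∫ ω, Set.indicator A (fun _ => (1:ℝ)) (X i ω) ∂P
        = ∫ y, Set.indicator A (fun _ => (1:ℝ)) y ∂(lawOf P X i) :=
      (integral_map (μ := P) (hXmeas i).aemeasurable hindmeas.aestronglyMeasurable).symm
    rw [heq, hmap, integral_indicator_const (1:ℝ) hA, smul_eq_mul, mul_one, hp]; exact sub_self _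
  have hZint : ∀ i j, Integrable (fun ω => Y i ω * Y j ω) P := by
    intro i j
    apply integrable_of_bounded' P ((hYmeas i).mul (hYmeas j)).aestronglyMeasurable (C := 1)
    intro ω
    rw [Pi.mul_apply, abs_mul]
    nlinarith [hYb i ω, hYb j ω, abs_nonneg (Y i ω), abs_nonneg (Y j ω)]
  have hcross : ∀ i j, i ≠ j → ∫ ω, Y i ω * Y j ω ∂P = 0 := by
    intro i j hne
    have hIF : IndepFun (Y i) (Y j) P := by
      have h := hXindep.indepFun hne
      exact h.comp ((measurable_const.indicator hA).sub measurable_const)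
        ((measurable_const.indicator hA).sub measurable_const)
    have := hIF.integral_mul_eq_mul_integral (hYint i).aestronglyMeasurable (hYint j).aestronglyMeasurable
    calc ∫ ω, Y i ω * Y j ω ∂P = ∫ ω, (Y i * Y j) ω ∂P := rfl
    _ = (∫ ω, Y i ω ∂P) * ∫ ω, Y j ω ∂P := this
    _ = 0 := by rw [hY0 i, hY0 j, mul_zero]
  set W : Ω → ℝ := fun ω => ∑ i ∈ Finset.Icc 1 n, αw n i * Y i ω with hW
  have hWmeas : Measurable W := by
    apply Finset.measurable_sum
    intro i _
    exact (hYmeas i).const_mul _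
  have hexpand : ∀ ω, W ω ^ 2 = ∑ i ∈ Finset.Icc 1 n, ∑ j ∈ Finset.Icc 1 n,
      (αw n i * αw n j) * (Y i ω * Y j ω) := by
    intro ω
    rw [hW]
    simp only
    rw [pow_two, Finset.sum_mul_sum]
    apply Finset.sum_congr rfl
    intro i _
    apply Finset.sum_congr rfl
    intro j _
    ring
  have hint2 : ∀ i j, Integrable (fun ω => (αw n i * αw n j) * (Y i ω * Y j ω)) P :=
    fun i j => (hZint i j).const_mul _
  have hWint : Integrable (fun ω => W ω ^ 2) P := by
    rw [show (fun ω => W ω ^ 2) = (fun ω => ∑ i ∈ Finset.Icc 1 n, ∑ j ∈ Finset.Icc 1 n,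
      (αw n i * αw n j) * (Y i ω * Y j ω)) from funext hexpand]
    exact integrable_finset_sum _ (fun i _ => integrable_finset_sum _ (fun j _ => hint2 i j))
  have hW2 : ∫ ω, W ω ^ 2 ∂P ≤ ∑ i ∈ Finset.Icc 1 n, (αw n i) ^ 2 := by
    have h1 : ∫ ω, W ω ^ 2 ∂P = ∑ i ∈ Finset.Icc 1 n, ∑ j ∈ Finset.Icc 1 n,
        (αw n i * αw n j) * ∫ ω, Y i ω * Y j ω ∂P := by
      rw [integral_congr_ae (ae_of_all _ hexpand), integral_finset_sum _
        (fun i _ => integrable_finset_sum _ (fun j _ => hint2 i j))]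
      apply Finset.sum_congr rfl
      intro i _
      rw [integral_finset_sum _ (fun j _ => hint2 i j)]
      apply Finset.sum_congr rfl
      intro j _
      rw [integral_const_mul]
    rw [h1]
    apply Finset.sum_le_sum
    intro i hi
    rw [Finset.sum_eq_single_of_mem i hi]
    · have hone : ∀ ω, Y i ω * Y i ω ≤ 1 := by
        intro ω
        have h2 := abs_le.1 (hYb i ω)
        nlinarith [h2.1, h2.2]
      have hYsq : ∫ ω, Y i ω * Y i ω ∂P ≤ 1 := by
        have h2 : ∫ ω, Y i ω * Y i ω ∂P ≤ ∫ _ω, (1:ℝ) ∂P :=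
          integral_mono (hZint i i) (integrable_const _) hone
        simpa using h2
      have hYsq0 : 0 ≤ ∫ ω, Y i ω * Y i ω ∂P :=
        integral_nonneg fun ω => mul_self_nonneg _
      nlinarith [mul_self_nonneg (αw n i), hYsq, hYsq0, sq_nonneg (αw n i)]
    · intro j _ hji
      rw [hcross i j (fun h => hji h.symm), mul_zero]
  -- Markov
  have hsub : {ω | t ≤ |W ω|} ⊆ {ω | ENNReal.ofReal (t ^ 2) ≤ ENNReal.ofReal (W ω ^ 2)} := by
    intro ω hω
    simp only [Set.mem_setOf_eq] at hω ⊢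
    apply ENNReal.ofReal_le_ofReal
    have h2 : t * t ≤ |W ω| * |W ω| := mul_le_mul hω hω ht.le (abs_nonneg _)
    have h3 := sq_abs (W ω)
    nlinarith
  have hg : AEMeasurable (fun ω => ENNReal.ofReal (W ω ^ 2)) P :=
    ((hWmeas.pow_const 2).ennreal_ofReal).aemeasurable
  have hm := mul_meas_ge_le_lintegral₀ hg (ENNReal.ofReal (t ^ 2))
  have hlint : ∫⁻ ω, ENNReal.ofReal (W ω ^ 2) ∂P = ENNReal.ofReal (∫ ω, W ω ^ 2 ∂P) :=
    (ofReal_integral_eq_lintegral_ofReal hWint (ae_of_all _ fun ω => sq_nonneg _)).symm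
  have ht2 : ENNReal.ofReal (t ^ 2) ≠ 0 := by
    simp only [ne_eq, ENNReal.ofReal_eq_zero, not_le]
    positivity
  calc P {ω | t ≤ |W ω|} ≤ P {ω | ENNReal.ofReal (t ^ 2) ≤ ENNReal.ofReal (W ω ^ 2)} :=
      measure_mono hsub
  _ ≤ (∫⁻ ω, ENNReal.ofReal (W ω ^ 2) ∂P) / ENNReal.ofReal (t ^ 2) := by
      rw [ENNReal.le_div_iff_mul_le (Or.inl ht2) (Or.inl ENNReal.ofReal_ne_top)]
      rw [mul_comm]
      exact hm
  _ = ENNReal.ofReal (∫ ω, W ω ^ 2 ∂P) / ENNReal.ofReal (t ^ 2) := by rw [hlint]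
  _ = ENNReal.ofReal ((∫ ω, W ω ^ 2 ∂P) / t ^ 2) := by
      rw [ENNReal.ofReal_div_of_pos (by positivity)]
  _ ≤ ENNReal.ofReal ((∑ i ∈ Finset.Icc 1 n, (αw n i) ^ 2) / t ^ 2) := by
      apply ENNReal.ofReal_le_ofReal
      gcongr

end Cheb

section GC

variable {m : ℕ} {Ω : Type*} [MeasurableSpace Ω]

lemma indicator_le_indicator_of_subset' {A B : Set (Fin m → ℝ)} (h : A ⊆ B) (z : Fin m → ℝ) :
    Set.indicator A (fun _ => (1:ℝ)) z ≤ Set.indicator B (fun _ => (1:ℝ)) z := by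
  by_cases hz : z ∈ A
  · rw [Set.indicator_of_mem hz, Set.indicator_of_mem (h hz)]
  · rw [Set.indicator_of_notMem hz]
    by_cases hz' : z ∈ B
    · rw [Set.indicator_of_mem hz']; norm_num
    · rw [Set.indicator_of_notMem hz']

lemma indicator_nonneg' (A : Set (Fin m → ℝ)) (z : Fin m → ℝ) :
    0 ≤ Set.indicator A (fun _ => (1:ℝ)) z := by
  by_cases hz : z ∈ A
  · rw [Set.indicator_of_mem hz]; norm_num
  · rw [Set.indicator_of_notMem hz]

lemma indicator_le_one' (A : Set (Fin m → ℝ)) (z : Fin m → ℝ) :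
    Set.indicator A (fun _ => (1:ℝ)) z ≤ 1 := by
  by_cases hz : z ∈ A
  · rw [Set.indicator_of_mem hz]
  · rw [Set.indicator_of_notMem hz]; norm_num

set_option maxHeartbeats 2000000 in
lemma gc_main (P : Measure Ω) [IsProbabilityMeasure P]
    (X : ℕ → Ω → Fin m → ℝ) (hXmeas : ∀ i, Measurable (X i))
    (hXindep : iIndepFun X P)
    (F : (Fin m → ℝ) → ℝ) (hF : IsCDF F) (hFuc : UniformContinuous F)
    (hFconv : TendstoUniformly (fun i => cdfm (lawOf P X i)) F atTop)
    (αw : ℕ → ℕ → ℝ) (κ : ℝ) (hα : WeightsOK αw κ)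
    {δ : ℝ} (hδ : 0 < δ) :
    Tendsto (fun n => P {ω | δ ≤ ⨆ x, |empCDF αw X n ω x - F x|}) atTop (𝓝 0) := by
  classical
  obtain ⟨μ, hμprob, hμeq⟩ := hF
  haveI := hμprob
  haveI hlawprob : ∀ i, IsProbabilityMeasure (lawOf P X i) := fun i =>
    Measure.isProbabilityMeasure_map (hXmeas i).aemeasurable
  set ε : ℝ := δ / (3 * m + 4) with hεdef
  have hε0 : 0 < ε := by
    apply div_pos hδ
    positivity
  -- uniform distance of the individual cdfs to F
  set sdist : ℕ → ℝ := fun i => ⨆ x, |cdfm (lawOf P X i) x - F x| with hsdef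
  have hdiff_le_one : ∀ i x, |cdfm (lawOf P X i) x - F x| ≤ 1 := by
    intro i x
    rw [hμeq, abs_le]
    constructor <;>
      linarith [cdfm_nonneg (lawOf P X i) x, cdfm_le_one (lawOf P X i) x,
        cdfm_nonneg μ x, cdfm_le_one μ x]
  have hs_bound : ∀ i x, |cdfm (lawOf P X i) x - F x| ≤ sdist i := by
    intro i x
    apply le_ciSup (f := fun x => |cdfm (lawOf P X i) x - F x|)
    refine ⟨1, ?_⟩
    rintro y ⟨x', rfl⟩
    exact hdiff_le_one i x'
  have hs0 : ∀ i, 0 ≤ sdist i := fun i => Real.iSup_nonneg fun x => abs_nonneg _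
  have hs1 : ∀ i, sdist i ≤ 1 := fun i => Real.iSup_le (fun x => hdiff_le_one i x) zero_le_one
  have hstend : Tendsto sdist atTop (𝓝 0) := by
    rw [Metric.tendsto_atTop]
    intro e he
    have := (Metric.tendstoUniformly_iff.1 hFconv) (e / 2) (by positivity)
    rw [eventually_atTop] at this
    obtain ⟨N, hN⟩ := this
    refine ⟨N, fun i hi => ?_⟩
    rw [Real.dist_eq, sub_zero, abs_of_nonneg (hs0 i)]
    have : sdist i ≤ e / 2 := by
      apply Real.iSup_le _ (by positivity)
      intro x
      have := hN i hi x
      rw [Real.dist_eq] at this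
      rw [abs_sub_comm]
      exact le_of_lt this
    linarith
  have hcdf_cmp : ∀ i x, |cdfm (lawOf P X i) x - cdfm μ x| ≤ sdist i := by
    intro i x
    rw [← hμeq]
    exact hs_bound i x
  -- choose the truncation levels
  have hMlo : ∃ klo : ℕ, ∀ j : Fin m, (μ {y | y j ≤ -(klo : ℝ)}).toReal < ε := by
    have hall : ∀ᶠ k : ℕ in atTop, ∀ j : Fin m, (μ {y | y j ≤ -(k : ℝ)}).toReal < ε := by
      rw [eventually_all]
      intro j
      have hanti : Antitone (fun k : ℕ => {y : Fin m → ℝ | y j ≤ -(k : ℝ)}) := by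
        intro k l hkl y hy
        simp only [Set.mem_setOf_eq] at hy ⊢
        have : (k : ℝ) ≤ l := by exact_mod_cast hkl
        linarith
      have hempty : (⋂ k : ℕ, {y : Fin m → ℝ | y j ≤ -(k : ℝ)}) = ∅ := by
        ext y
        simp only [Set.mem_iInter, Set.mem_setOf_eq, Set.mem_empty_iff_false, iff_false, not_forall]
        obtain ⟨k, hk⟩ := exists_nat_gt (-(y j))
        exact ⟨k, by push_neg; linarith⟩
      have := tendsto_measure_iInter_atTop (μ := μ)
        (s := fun k : ℕ => {y : Fin m → ℝ | y j ≤ -(k : ℝ)})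
        (fun k => (((measurable_pi_apply j) measurableSet_Iic).nullMeasurableSet)) hanti
        ⟨0, measure_ne_top μ _⟩
      rw [hempty] at this
      simp only [measure_empty] at this
      have h2 := (ENNReal.tendsto_toReal (by norm_num : (0:ℝ≥0∞) ≠ ⊤)).comp this
      simp only [ENNReal.toReal_zero] at h2
      exact h2.eventually_lt_const hε0
    exact hall.exists
  obtain ⟨klo, hklo⟩ := hMlo
  have hMhi : ∃ khi : ℕ, ∀ j : Fin m, (μ {y | (khi : ℝ) < y j}).toReal < ε := by
    have hall : ∀ᶠ k : ℕ in atTop, ∀ j : Fin m, (μ {y | (k : ℝ) < y j}).toReal < ε := by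
      rw [eventually_all]
      intro j
      have hanti : Antitone (fun k : ℕ => {y : Fin m → ℝ | (k : ℝ) < y j}) := by
        intro k l hkl y hy
        simp only [Set.mem_setOf_eq] at hy ⊢
        have : (k : ℝ) ≤ l := by exact_mod_cast hkl
        linarith
      have hempty : (⋂ k : ℕ, {y : Fin m → ℝ | (k : ℝ) < y j}) = ∅ := by
        ext y
        simp only [Set.mem_iInter, Set.mem_setOf_eq, Set.mem_empty_iff_false, iff_false, not_forall]
        obtain ⟨k, hk⟩ := exists_nat_gt (y j)
        exact ⟨k, by push_neg; linarith⟩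
      have := tendsto_measure_iInter_atTop (μ := μ)
        (s := fun k : ℕ => {y : Fin m → ℝ | (k : ℝ) < y j})
        (fun k => (((measurable_pi_apply j) measurableSet_Ioi).nullMeasurableSet)) hanti
        ⟨0, measure_ne_top μ _⟩
      rw [hempty] at this
      simp only [measure_empty] at this
      have h2 := (ENNReal.tendsto_toReal (by norm_num : (0:ℝ≥0∞) ≠ ⊤)).comp this
      simp only [ENNReal.toReal_zero] at h2
      exact h2.eventually_lt_const hε0
    exact hall.exists
  obtain ⟨khi, hkhi⟩ := hMhi
  -- uniform continuity modulus
  obtain ⟨δ₀, hδ₀pos, hδ₀⟩ := Metric.uniformContinuous_iff.1 hFuc ε hε0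
  set h : ℝ := δ₀ / 2 with hhdef
  have hh0 : 0 < h := by positivity
  set K : ℕ := Nat.ceil (((khi : ℝ) + (klo : ℝ)) / h) + 1 with hKdef
  set tK : ℝ := -(klo : ℝ) + K * h with htKdef
  have htKhi : (khi : ℝ) ≤ tK := by
    have h1 : ((khi : ℝ) + (klo : ℝ)) / h ≤ K := by
      rw [hKdef]
      push_cast
      linarith [Nat.le_ceil (((khi : ℝ) + (klo : ℝ)) / h)]
    have h2 : (khi : ℝ) + (klo : ℝ) ≤ K * h := by
      rw [div_le_iff₀ hh0] at h1
      linarith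
    rw [htKdef]
    linarith
  -- grid
  set Grid : Finset (Fin m → ℝ) :=
    Fintype.piFinset (fun _ : Fin m => (Finset.range (K + 1)).image
      (fun k : ℕ => -(klo : ℝ) + (k : ℝ) * h)) with hGriddef
  set Bset : Fin m → Set (Fin m → ℝ) := fun j => {y | y j ≤ -(klo : ℝ)} with hBdef
  set Cset : Fin m → Set (Fin m → ℝ) := fun j => {y | y j ≤ tK} with hCdef
  have hBmeas : ∀ j, MeasurableSet (Bset j) := fun j =>
    (measurable_pi_apply j) measurableSet_Iic
  have hCmeas : ∀ j, MeasurableSet (Cset j) := fun j =>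
    (measurable_pi_apply j) measurableSet_Iic
  -- the three families of bad events
  set bad : Set (Fin m → ℝ) → ℕ → Set Ω := fun A n =>
    {ω | ε ≤ |∑ i ∈ Finset.Icc 1 n, αw n i *
        (Set.indicator A (fun _ => (1:ℝ)) (X i ω) - (lawOf P X i A).toReal)|} with hbaddef
  set BadAll : ℕ → Set Ω := fun n =>
    (⋃ a ∈ Grid, bad (Set.Iic a) n) ∪ ((⋃ j : Fin m, bad (Bset j) n) ∪
      (⋃ j : Fin m, bad (Cset j) n)) with hBadAlldef
  set bnd : ℕ → ℝ≥0∞ := fun n =>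
    ENNReal.ofReal ((∑ i ∈ Finset.Icc 1 n, (αw n i) ^ 2) / ε ^ 2) with hbnddef
  have hbadP : ∀ (A : Set (Fin m → ℝ)), MeasurableSet A → ∀ n, P (bad A n) ≤ bnd n :=
    fun A hA n => cheb_bound P hXmeas hXindep hα hA n hε0
  have hBadAllP : ∀ n, P (BadAll n) ≤ ((Grid.card : ℝ≥0∞) + m + m) * bnd n := by
    intro n
    have h1 : P (⋃ a ∈ Grid, bad (Set.Iic a) n) ≤ (Grid.card : ℝ≥0∞) * bnd n := by
      calc P (⋃ a ∈ Grid, bad (Set.Iic a) n) ≤ ∑ a ∈ Grid, P (bad (Set.Iic a) n) :=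
          measure_biUnion_finset_le Grid _
      _ ≤ ∑ _a ∈ Grid, bnd n := Finset.sum_le_sum fun a _ => hbadP _ (measurableSet_pi_Iic a) n
      _ = (Grid.card : ℝ≥0∞) * bnd n := by rw [Finset.sum_const, nsmul_eq_mul]
    have h2 : P (⋃ j : Fin m, bad (Bset j) n) ≤ (m : ℝ≥0∞) * bnd n := by
      calc P (⋃ j : Fin m, bad (Bset j) n) ≤ ∑ j : Fin m, P (bad (Bset j) n) :=
          measure_iUnion_fintype_le _ _
      _ ≤ ∑ _j : Fin m, bnd n := Finset.sum_le_sum fun j _ => hbadP _ (hBmeas j) n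
      _ = (m : ℝ≥0∞) * bnd n := by
          rw [Finset.sum_const, nsmul_eq_mul, Finset.card_univ, Fintype.card_fin]
    have h3 : P (⋃ j : Fin m, bad (Cset j) n) ≤ (m : ℝ≥0∞) * bnd n := by
      calc P (⋃ j : Fin m, bad (Cset j) n) ≤ ∑ j : Fin m, P (bad (Cset j) n) :=
          measure_iUnion_fintype_le _ _
      _ ≤ ∑ _j : Fin m, bnd n := Finset.sum_le_sum fun j _ => hbadP _ (hCmeas j) n
      _ = (m : ℝ≥0∞) * bnd n := by
          rw [Finset.sum_const, nsmul_eq_mul, Finset.card_univ, Fintype.card_fin]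
    calc P (BadAll n) ≤ P (⋃ a ∈ Grid, bad (Set.Iic a) n)
        + (P (⋃ j : Fin m, bad (Bset j) n) + P (⋃ j : Fin m, bad (Cset j) n)) := by
          rw [hBadAlldef]
          refine le_trans (measure_union_le _ _) ?_
          gcongr
          exact measure_union_le _ _
    _ ≤ (Grid.card : ℝ≥0∞) * bnd n + ((m : ℝ≥0∞) * bnd n + (m : ℝ≥0∞) * bnd n) :=
        add_le_add h1 (add_le_add h2 h3)
    _ = ((Grid.card : ℝ≥0∞) + m + m) * bnd n := by ring
  have hbndtend : Tendsto bnd atTop (𝓝 0) := by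
    have h1 : Tendsto (fun n => (∑ i ∈ Finset.Icc 1 n, (αw n i) ^ 2) / ε ^ 2) atTop (𝓝 0) := by
      have := (sumsq_tendsto hα).div_const (ε ^ 2)
      simpa using this
    have h2 := ENNReal.tendsto_ofReal h1
    simpa using h2
  have hCbnd : Tendsto (fun n => ((Grid.card : ℝ≥0∞) + m + m) * bnd n) atTop (𝓝 0) := by
    have hne : ((Grid.card : ℝ≥0∞) + m + m) ≠ ⊤ :=
      ENNReal.add_ne_top.2 ⟨ENNReal.add_ne_top.2
        ⟨ENNReal.natCast_ne_top _, ENNReal.natCast_ne_top _⟩, ENNReal.natCast_ne_top _⟩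
    have := ENNReal.Tendsto.const_mul hbndtend (Or.inr hne)
    simpa using this
  -- the key deterministic inclusion
  have hincl : ∀ n, 1 ≤ n → (∑ i ∈ Finset.Icc 1 n, αw n i * sdist i) ≤ ε →
      {ω | δ ≤ ⨆ x, |empCDF αw X n ω x - F x|} ⊆ BadAll n := by
    intro n hn1 hmixn
    intro ω hω
    by_contra hωnot
    simp only [Set.mem_setOf_eq] at hω
    -- extract the goodness facts
    have hsum1 : ∑ i ∈ Finset.Icc 1 n, αw n i = 1 := hα.2.1 n hn1
    set Ew : Set (Fin m → ℝ) → ℝ := fun A =>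
      ∑ i ∈ Finset.Icc 1 n, αw n i * Set.indicator A (fun _ => (1:ℝ)) (X i ω) with hEwdef
    set mixw : Set (Fin m → ℝ) → ℝ := fun A =>
      ∑ i ∈ Finset.Icc 1 n, αw n i * (lawOf P X i A).toReal with hmixwdef
    have hWsplit : ∀ A : Set (Fin m → ℝ),
        (∑ i ∈ Finset.Icc 1 n, αw n i *
          (Set.indicator A (fun _ => (1:ℝ)) (X i ω) - (lawOf P X i A).toReal))
        = Ew A - mixw A := by
      intro A
      rw [hEwdef, hmixwdef]
      simp only
      rw [← Finset.sum_sub_distrib]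
      apply Finset.sum_congr rfl
      intro i _
      ring
    have hgood : ∀ A : Set (Fin m → ℝ), (ω ∉ bad A n) → |Ew A - mixw A| < ε := by
      intro A hA
      rw [hbaddef] at hA
      simp only [Set.mem_setOf_eq, not_le] at hA
      rw [← hWsplit]
      exact hA
    rw [hBadAlldef] at hωnot
    simp only [Set.mem_union, Set.mem_iUnion, not_or, not_exists] at hωnot
    obtain ⟨hnotQ, hnotB, hnotC⟩ := hωnot
    have hgoodQ : ∀ a ∈ Grid, |Ew (Set.Iic a) - mixw (Set.Iic a)| < ε := fun a ha =>
      hgood _ (hnotQ a ha)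
    have hgoodB : ∀ j, |Ew (Bset j) - mixw (Bset j)| < ε := fun j => hgood _ (hnotB j)
    have hgoodC : ∀ j, |Ew (Cset j) - mixw (Cset j)| < ε := fun j => hgood _ (hnotC j)
    -- mixture close to μ
    have hmix_cmp : ∀ (A : Set (Fin m → ℝ)),
        (∀ i, |(lawOf P X i A).toReal - (μ A).toReal| ≤ sdist i) →
        |mixw A - (μ A).toReal| ≤ ε := by
      intro A hA
      rw [hmixwdef]
      simp only
      have : (μ A).toReal = ∑ i ∈ Finset.Icc 1 n, αw n i * (μ A).toReal := by
        rw [← Finset.sum_mul, hsum1, one_mul]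
      rw [this, ← Finset.sum_sub_distrib]
      calc |∑ i ∈ Finset.Icc 1 n, (αw n i * (lawOf P X i A).toReal - αw n i * (μ A).toReal)|
          ≤ ∑ i ∈ Finset.Icc 1 n, |αw n i * (lawOf P X i A).toReal - αw n i * (μ A).toReal| :=
            Finset.abs_sum_le_sum_abs _ _
        _ ≤ ∑ i ∈ Finset.Icc 1 n, αw n i * sdist i := by
            apply Finset.sum_le_sum
            intro i hi
            rw [← mul_sub, abs_mul, abs_of_nonneg (hα.1 n i hi)]
            exact mul_le_mul_of_nonneg_left (hA i) (hα.1 n i hi)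
        _ ≤ ε := hmixn
    have hmixQ : ∀ a : Fin m → ℝ, |mixw (Set.Iic a) - (μ (Set.Iic a)).toReal| ≤ ε := by
      intro a
      apply hmix_cmp
      intro i
      exact hcdf_cmp i a
    have hmixB : ∀ j, |mixw (Bset j) - (μ (Bset j)).toReal| ≤ ε := by
      intro j
      apply hmix_cmp
      intro i
      exact cmp_slab (lawOf P X i) μ (hcdf_cmp i) j (-(klo:ℝ))
    have hmixC : ∀ j, |mixw (Cset j) - (μ (Cset j)).toReal| ≤ ε := by
      intro j
      apply hmix_cmp
      intro i
      exact cmp_slab (lawOf P X i) μ (hcdf_cmp i) j tK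
    -- basic Ew facts
    have hEwmono : ∀ {A B : Set (Fin m → ℝ)}, A ⊆ B → Ew A ≤ Ew B := by
      intro A B hAB
      apply Finset.sum_le_sum
      intro i hi
      exact mul_le_mul_of_nonneg_left (indicator_le_indicator_of_subset' hAB _) (hα.1 n i hi)
    have hEwnonneg : ∀ A : Set (Fin m → ℝ), 0 ≤ Ew A := by
      intro A
      apply Finset.sum_nonneg
      intro i hi
      exact mul_nonneg (hα.1 n i hi) (indicator_nonneg' _ _)
    have hEwle1 : ∀ A : Set (Fin m → ℝ), Ew A ≤ 1 := by
      intro A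
      rw [← hsum1]
      apply Finset.sum_le_sum
      intro i hi
      calc αw n i * Set.indicator A (fun _ => (1:ℝ)) (X i ω) ≤ αw n i * 1 :=
        mul_le_mul_of_nonneg_left (indicator_le_one' _ _) (hα.1 n i hi)
      _ = αw n i := mul_one _
    -- the uniform bound on the event
    have hunif : ∀ x : Fin m → ℝ, |Ew (Set.Iic x) - F x| ≤ (3 * m + 3) * ε := by
      intro x
      by_cases hcase : ∀ j, -(klo : ℝ) ≤ x j
      · -- main case: grid sandwich
        set kf : Fin m → ℕ := fun j => min K (Nat.floor ((x j + klo) / h)) with hkfdef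
        set a : Fin m → ℝ := fun j => -(klo : ℝ) + (kf j) * h with hadef
        set b : Fin m → ℝ := fun j => -(klo : ℝ) + (min K (kf j + 1)) * h with hbdef2
        have ha_mem : a ∈ Grid := by
          rw [hGriddef, Fintype.mem_piFinset]
          intro j
          rw [Finset.mem_image]
          exact ⟨kf j, Finset.mem_range.2 (Nat.lt_succ_of_le (min_le_left _ _)), rfl⟩
        have hb_mem : b ∈ Grid := by
          rw [hGriddef, Fintype.mem_piFinset]
          intro j
          rw [Finset.mem_image]
          exact ⟨min K (kf j + 1), Finset.mem_range.2 (Nat.lt_succ_of_le (min_le_left _ _)), rfl⟩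
        have ha_le : a ≤ x := by
          intro j
          show -(klo : ℝ) + (kf j : ℝ) * h ≤ x j
          have hnn : (0:ℝ) ≤ (x j + klo) / h := div_nonneg (by linarith [hcase j]) hh0.le
          have hc1 : ((kf j : ℝ)) ≤ ((Nat.floor ((x j + klo) / h) : ℕ) : ℝ) := by
            exact_mod_cast min_le_right K _
          have h1 : ((kf j : ℝ)) ≤ (x j + klo) / h := le_trans hc1 (Nat.floor_le hnn)
          have h2 : (kf j : ℝ) * h ≤ x j + klo := (le_div_iff₀ hh0).mp h1
          linarith
        have hab : ∀ j, a j ≤ b j ∧ b j ≤ a j + h := by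
          intro j
          constructor
          · rw [hadef, hbdef2]
            simp only
            have h2 : (kf j : ℝ) ≤ ((min K (kf j + 1) : ℕ) : ℝ) := by
              exact_mod_cast le_min (min_le_left _ _) (Nat.le_succ _)
            have h3 := mul_le_mul_of_nonneg_right h2 hh0.le
            linarith
          · rw [hadef, hbdef2]
            simp only
            have h2 : ((min K (kf j + 1) : ℕ) : ℝ) ≤ (kf j : ℝ) + 1 := by
              exact_mod_cast min_le_right _ _
            have h3 := mul_le_mul_of_nonneg_right h2 hh0.le
            linarith
        have hb_tK : ∀ j, b j < x j → b j = tK := by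
          intro j hbx
          rw [hbdef2] at hbx ⊢
          simp only at hbx ⊢
          by_cases hKle : kf j + 1 ≤ K
          · exfalso
            rw [min_eq_right hKle] at hbx
            have hkfK : kf j < K := Nat.lt_of_succ_le hKle
            have hkfeq : kf j = Nat.floor ((x j + klo) / h) := by
              rw [hkfdef]
              simp only
              apply min_eq_right
              by_contra hcon
              push_neg at hcon
              have : kf j = K := by
                rw [hkfdef]
                simp only
                exact min_eq_left (le_of_lt hcon)
              omega
            have hlt : (x j + klo) / h < (kf j : ℝ) + 1 := by
              rw [hkfeq]
              exact Nat.lt_floor_add_one _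
            have : x j + klo < ((kf j : ℝ) + 1) * h := by
              rw [div_lt_iff₀ hh0] at hlt
              linarith
            push_cast at hbx
            nlinarith
          · push_neg at hKle
            rw [min_eq_left (by omega : K ≤ kf j + 1)]
        have hyb : ∀ y : Fin m → ℝ, y ≤ x → (∀ j, y ∈ Cset j) → y ≤ b := by
          intro y hyx hyC j
          by_cases hxb : x j ≤ b j
          · exact le_trans (hyx j) hxb
          · push_neg at hxb
            rw [hb_tK j hxb]
            exact hyC j
        -- decomposition of the indicator
        have hdecomp : ∀ z : Fin m → ℝ,
            Set.indicator (Set.Iic x) (fun _ => (1:ℝ)) z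
            ≤ Set.indicator (Set.Iic b) (fun _ => (1:ℝ)) z
              + ∑ j : Fin m, (1 - Set.indicator (Cset j) (fun _ => (1:ℝ)) z) := by
          intro z
          have hterms : ∀ j : Fin m, (0:ℝ) ≤ 1 - Set.indicator (Cset j) (fun _ => (1:ℝ)) z := by
            intro j
            linarith [indicator_le_one' (Cset j) z]
          by_cases hz : z ∈ Set.Iic x
          · rw [Set.indicator_of_mem hz]
            by_cases hzC : ∀ j, z ∈ Cset j
            · have : z ∈ Set.Iic b := hyb z hz hzC
              rw [Set.indicator_of_mem this]
              have : (0:ℝ) ≤ ∑ j : Fin m, (1 - Set.indicator (Cset j) (fun _ => (1:ℝ)) z) :=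
                Finset.sum_nonneg fun j _ => hterms j
              linarith
            · push_neg at hzC
              obtain ⟨j, hj⟩ := hzC
              have h1 : (1:ℝ) ≤ ∑ j' : Fin m, (1 - Set.indicator (Cset j') (fun _ => (1:ℝ)) z) := by
                have : (1:ℝ) - Set.indicator (Cset j) (fun _ => (1:ℝ)) z = 1 := by
                  rw [Set.indicator_of_notMem hj]; ring
                calc (1:ℝ) = 1 - Set.indicator (Cset j) (fun _ => (1:ℝ)) z := this.symm
                _ ≤ ∑ j' : Fin m, (1 - Set.indicator (Cset j') (fun _ => (1:ℝ)) z) :=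
                  Finset.single_le_sum (fun j' _ => hterms j') (Finset.mem_univ j)
              linarith [indicator_nonneg' (Set.Iic b) z]
          · rw [Set.indicator_of_notMem hz]
            have : (0:ℝ) ≤ ∑ j : Fin m, (1 - Set.indicator (Cset j) (fun _ => (1:ℝ)) z) :=
              Finset.sum_nonneg fun j _ => hterms j
            linarith [indicator_nonneg' (Set.Iic b) z]
        have hEwsub : Ew (Set.Iic x) ≤ Ew (Set.Iic b) + ∑ j : Fin m, (1 - Ew (Cset j)) := by
          calc Ew (Set.Iic x)
              ≤ ∑ i ∈ Finset.Icc 1 n, αw n i * (Set.indicator (Set.Iic b) (fun _ => (1:ℝ)) (X i ω)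
                + ∑ j : Fin m, (1 - Set.indicator (Cset j) (fun _ => (1:ℝ)) (X i ω))) := by
                apply Finset.sum_le_sum
                intro i hi
                exact mul_le_mul_of_nonneg_left (hdecomp (X i ω)) (hα.1 n i hi)
            _ = Ew (Set.Iic b) + ∑ j : Fin m, (1 - Ew (Cset j)) := by
                rw [hEwdef]
                simp only [mul_add, Finset.sum_add_distrib, Finset.mul_sum, mul_sub, mul_one]
                congr 1
                rw [Finset.sum_comm]
                apply Finset.sum_congr rfl
                intro j _
                rw [Finset.sum_sub_distrib, hsum1]
        -- tail bounds
        have htailC : ∀ j, (μ ((Cset j)ᶜ)).toReal < ε := by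
          intro j
          have hsubset : (Cset j)ᶜ ⊆ {y : Fin m → ℝ | (khi : ℝ) < y j} := by
            intro y hy
            rw [hCdef] at hy
            simp only [Set.mem_compl_iff, Set.mem_setOf_eq, not_le] at hy
            simp only [Set.mem_setOf_eq]
            linarith [htKhi]
          calc (μ ((Cset j)ᶜ)).toReal ≤ (μ {y : Fin m → ℝ | (khi : ℝ) < y j}).toReal :=
              ENNReal.toReal_mono (measure_ne_top μ _) (measure_mono hsubset)
          _ < ε := hkhi j
        have hCtail : ∀ j, 1 - Ew (Cset j) ≤ 3 * ε := by
          intro j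
          have h1 : |Ew (Cset j) - mixw (Cset j)| < ε := hgoodC j
          have h2 : |mixw (Cset j) - (μ (Cset j)).toReal| ≤ ε := hmixC j
          have h3 : 1 - (μ (Cset j)).toReal < ε := by
            have hcompl : (μ ((Cset j)ᶜ)).toReal = 1 - (μ (Cset j)).toReal := by
              rw [measure_compl (hCmeas j) (measure_ne_top μ _), measure_univ,
                ENNReal.toReal_sub_of_le prob_le_one ENNReal.one_ne_top, ENNReal.toReal_one]
            linarith [htailC j, hcompl ▸ htailC j]
          have ha1 := abs_le.1 (le_of_lt h1)
          have ha2 := abs_le.1 h2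
          linarith [ha1.1, ha1.2, ha2.1, ha2.2]
        -- measure analogue
        have hμsub : (μ (Set.Iic x)).toReal ≤ (μ (Set.Iic b)).toReal
            + ∑ j : Fin m, (μ ((Cset j)ᶜ)).toReal := by
          have hincl2 : Set.Iic x ⊆ Set.Iic b ∪ ⋃ j : Fin m, (Cset j)ᶜ := by
            intro y hy
            by_cases hyC : ∀ j, y ∈ Cset j
            · exact Or.inl (hyb y hy hyC)
            · push_neg at hyC
              obtain ⟨j, hj⟩ := hyC
              exact Or.inr (Set.mem_iUnion.2 ⟨j, hj⟩)
          have h1 : μ (Set.Iic x) ≤ μ (Set.Iic b) + ∑ j : Fin m, μ ((Cset j)ᶜ) := by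
            calc μ (Set.Iic x) ≤ μ (Set.Iic b ∪ ⋃ j : Fin m, (Cset j)ᶜ) := measure_mono hincl2
            _ ≤ μ (Set.Iic b) + μ (⋃ j : Fin m, (Cset j)ᶜ) := measure_union_le _ _
            _ ≤ μ (Set.Iic b) + ∑ j : Fin m, μ ((Cset j)ᶜ) := by
                gcongr
                exact measure_iUnion_fintype_le _ _
          have h2 := ENNReal.toReal_mono (by
            apply ENNReal.add_ne_top.2
            exact ⟨measure_ne_top μ _, ENNReal.sum_ne_top.2 fun j _ => measure_ne_top μ _⟩) h1
          rw [ENNReal.toReal_add (measure_ne_top μ _)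
            (ENNReal.sum_ne_top.2 fun j _ => measure_ne_top μ _), ENNReal.toReal_sum
            (fun j _ => measure_ne_top μ _)] at h2
          exact h2
        -- F(b) close to F(a) close to F(x)
        have hFba : |F b - F a| ≤ ε := by
          have hdist : dist b a < δ₀ := by
            have : dist b a ≤ h := by
              rw [dist_pi_le_iff hh0.le]
              intro j
              rw [Real.dist_eq, abs_le]
              constructor <;> linarith [(hab j).1, (hab j).2]
            rw [hhdef] at this
            linarith
          have := hδ₀ hdist
          rw [Real.dist_eq] at this
          exact le_of_lt this
        have hFax : F a ≤ F x := by
          rw [hμeq]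
          exact cdfm_mono μ ha_le
        have hFxb : F x ≤ F b + m * ε := by
          have h1 : F x ≤ F b + ∑ j : Fin m, (μ ((Cset j)ᶜ)).toReal := by
            rw [hμeq]
            calc cdfm μ x ≤ (μ (Set.Iic b)).toReal + ∑ j : Fin m, (μ ((Cset j)ᶜ)).toReal := hμsub
            _ = cdfm μ b + ∑ j : Fin m, (μ ((Cset j)ᶜ)).toReal := rfl
          have h2 : ∑ j : Fin m, (μ ((Cset j)ᶜ)).toReal ≤ m * ε := by
            calc ∑ j : Fin m, (μ ((Cset j)ᶜ)).toReal ≤ ∑ _j : Fin m, ε :=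
              Finset.sum_le_sum fun j _ => le_of_lt (htailC j)
            _ = m * ε := by rw [Finset.sum_const, nsmul_eq_mul, Finset.card_univ, Fintype.card_fin]
          linarith
        -- upper bound
        have hupper : Ew (Set.Iic x) - F x ≤ (3 * m + 3) * ε := by
          have h1 : Ew (Set.Iic b) ≤ F b + 2 * ε := by
            have ha1 := abs_le.1 (le_of_lt (hgoodQ b hb_mem))
            have ha2 := abs_le.1 (hmixQ b)
            rw [hμeq]
            have : cdfm μ b = (μ (Set.Iic b)).toReal := rfl
            rw [this]
            linarith [ha1.2, ha2.2]
          have h2 : ∑ j : Fin m, (1 - Ew (Cset j)) ≤ m * (3 * ε) := by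
            calc ∑ j : Fin m, (1 - Ew (Cset j)) ≤ ∑ _j : Fin m, 3 * ε :=
              Finset.sum_le_sum fun j _ => hCtail j
            _ = m * (3 * ε) := by
                rw [Finset.sum_const, nsmul_eq_mul, Finset.card_univ, Fintype.card_fin]
          have h3 : F b ≤ F a + ε := by
            have := abs_le.1 hFba
            linarith [this.2]
          have := hEwsub
          nlinarith [hFax, mul_nonneg (Nat.cast_nonneg (α := ℝ) m) hε0.le]
        have hlower : F x - Ew (Set.Iic x) ≤ (3 * m + 3) * ε := by
          have h1 : Ew (Set.Iic a) ≥ F a - 2 * ε := by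
            have ha1 := abs_le.1 (le_of_lt (hgoodQ a ha_mem))
            have ha2 := abs_le.1 (hmixQ a)
            rw [hμeq]
            have : cdfm μ a = (μ (Set.Iic a)).toReal := rfl
            rw [this]
            linarith [ha1.1, ha2.1]
          have h2 : Ew (Set.Iic a) ≤ Ew (Set.Iic x) :=
            hEwmono (Set.Iic_subset_Iic.2 ha_le)
          have h3 : F x ≤ F a + ε + m * ε := by
            have h4 : F b ≤ F a + ε := by
              have := abs_le.1 hFba
              linarith [this.2]
            linarith [hFxb]
          have h6 : (0:ℝ) ≤ (m:ℝ) * ε := mul_nonneg (Nat.cast_nonneg _) hε0.le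
          have hg : (3 * (m:ℝ) + 3) * ε = 3 * ((m:ℝ) * ε) + 3 * ε := by ring
          rw [hg]
          linarith
        rw [abs_le]
        constructor <;> linarith
      · -- tail case: some coordinate below the grid
        push_neg at hcase
        obtain ⟨j, hj⟩ := hcase
        have hsubB : Set.Iic x ⊆ Bset j := by
          intro y hy
          rw [hBdef]
          simp only [Set.mem_setOf_eq]
          have := hy j
          linarith [hy j]
        have h1 : Ew (Set.Iic x) ≤ Ew (Bset j) := hEwmono hsubB
        have h2 : Ew (Bset j) ≤ (μ (Bset j)).toReal + 2 * ε := by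
          have ha1 := abs_le.1 (le_of_lt (hgoodB j))
          have ha2 := abs_le.1 (hmixB j)
          linarith [ha1.2, ha2.2]
        have h3 : (μ (Bset j)).toReal < ε := hklo j
        have h4 : F x ≤ ε := by
          rw [hμeq]
          calc cdfm μ x ≤ (μ (Bset j)).toReal :=
            ENNReal.toReal_mono (measure_ne_top μ _) (measure_mono hsubB)
          _ ≤ ε := le_of_lt h3
        have h5 : 0 ≤ F x := by rw [hμeq]; exact cdfm_nonneg μ x
        have h6 : 0 ≤ Ew (Set.Iic x) := hEwnonneg _
        rw [abs_le]
        have hm1 : (1:ℝ) ≤ 3 * m + 3 := by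
          have := Nat.cast_nonneg (α := ℝ) m
          linarith
        constructor
        · nlinarith
        · have : Ew (Set.Iic x) ≤ 3 * ε := by linarith
          nlinarith
    -- conclude: sup < δ, contradiction
    have hsup : (⨆ x, |empCDF αw X n ω x - F x|) ≤ (3 * m + 3) * ε := by
      apply Real.iSup_le _ (by positivity)
      intro x
      have : empCDF αw X n ω x = Ew (Set.Iic x) := rfl
      rw [this]
      exact hunif x
    have hlt : (3 * m + 3) * ε < δ := by
      have hpos : (0:ℝ) < 3 * m + 4 := by positivity
      rw [hεdef, ← mul_div_assoc, div_lt_iff₀ hpos]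
      nlinarith [hδ, Nat.cast_nonneg (α := ℝ) m]
    linarith
  -- put everything together
  apply tendsto_of_tendsto_of_tendsto_of_le_of_le' tendsto_const_nhds hCbnd
  · exact Eventually.of_forall fun n => zero_le
  · have hev1 : ∀ᶠ n : ℕ in atTop, (∑ i ∈ Finset.Icc 1 n, αw n i * sdist i) ≤ ε := by
      have := wavg_tendsto hα hs0 hs1 hstend
      rw [Metric.tendsto_atTop] at this
      obtain ⟨N, hN⟩ := this ε hε0
      rw [eventually_atTop]
      refine ⟨N, fun n hn => ?_⟩
      have := hN n hn
      rw [Real.dist_eq, sub_zero] at this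
      exact le_of_lt (lt_of_le_of_lt (le_abs_self _) this)
    filter_upwards [eventually_ge_atTop 1, hev1] with n hn1 hmixn
    calc P {ω | δ ≤ ⨆ x, |empCDF αw X n ω x - F x|} ≤ P (BadAll n) :=
        measure_mono (hincl n hn1 hmixn)
    _ ≤ ((Grid.card : ℝ≥0∞) + m + m) * bnd n := hBadAllP n

end GC

section Glue

lemma abs_lt_of_supEDist_lt {T : Type*} {f g : T → ℝ} {c : ℝ}
    (h : supEDist f g < ENNReal.ofReal c) (t : T) : |f t - g t| < c := by
  have h1 : ENNReal.ofReal |f t - g t| ≤ supEDist f g :=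
    le_iSup (fun t' => ENNReal.ofReal |f t' - g t'|) t
  have h2 : ENNReal.ofReal |f t - g t| < ENNReal.ofReal c := lt_of_le_of_lt h1 h
  have hc : 0 < c := by
    by_contra hc
    push_neg at hc
    rw [ENNReal.ofReal_eq_zero.2 hc] at h2
    simp at h2
  rwa [ENNReal.ofReal_lt_ofReal_iff hc] at h2

lemma supEDist_lt_of_le {T : Type*} {f g : T → ℝ} {c : ℝ} (hc : 0 < c)
    (h : ∀ t, |f t - g t| ≤ c / 2) : supEDist f g < ENNReal.ofReal c := by
  have h1 : supEDist f g ≤ ENNReal.ofReal (c / 2) :=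
    iSup_le fun t => ENNReal.ofReal_le_ofReal (h t)
  apply lt_of_le_of_lt h1
  rw [ENNReal.ofReal_lt_ofReal_iff hc]
  linarith

lemma IsCDF.nonneg' {m : ℕ} {K : (Fin m → ℝ) → ℝ} (h : IsCDF K) (x : Fin m → ℝ) :
    0 ≤ K x := by
  obtain ⟨μ, hμ, rfl⟩ := h
  exact cdfm_nonneg μ x

lemma IsCDF.le_one' {m : ℕ} {K : (Fin m → ℝ) → ℝ} (h : IsCDF K) (x : Fin m → ℝ) :
    K x ≤ 1 := by
  obtain ⟨μ, hμ, rfl⟩ := h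
  haveI := hμ
  exact cdfm_le_one μ x

lemma empCDF_nonneg {Ω : Type*} {m : ℕ} {αw : ℕ → ℕ → ℝ} {κ : ℝ} (hα : WeightsOK αw κ)
    (X : ℕ → Ω → Fin m → ℝ) (n : ℕ) (ω : Ω) (x : Fin m → ℝ) :
    0 ≤ empCDF αw X n ω x :=
  Finset.sum_nonneg fun i hi => mul_nonneg (hα.1 n i hi) (indicator_nonneg' _ _)

lemma empCDF_le_one {Ω : Type*} {m : ℕ} {αw : ℕ → ℕ → ℝ} {κ : ℝ} (hα : WeightsOK αw κ)
    (X : ℕ → Ω → Fin m → ℝ) {n : ℕ} (hn : 1 ≤ n) (ω : Ω) (x : Fin m → ℝ) :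
    empCDF αw X n ω x ≤ 1 := by
  rw [← hα.2.1 n hn]
  apply Finset.sum_le_sum
  intro i hi
  calc αw n i * Set.indicator {y : Fin m → ℝ | y ≤ x} (fun _ => (1:ℝ)) (X i ω) ≤ αw n i * 1 :=
    mul_le_mul_of_nonneg_left (indicator_le_one' _ _) (hα.1 n i hi)
  _ = αw n i := mul_one _

lemma isCDF_empCDF {Ω : Type*} {m : ℕ} {αw : ℕ → ℕ → ℝ} {κ : ℝ} (hα : WeightsOK αw κ)
    (X : ℕ → Ω → Fin m → ℝ) {n : ℕ} (hn : 1 ≤ n) (ω : Ω) :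
    IsCDF (empCDF αw X n ω) := by
  classical
  refine ⟨∑ i ∈ Finset.Icc 1 n, ENNReal.ofReal (αw n i) • Measure.dirac (X i ω), ?_, ?_⟩
  · constructor
    rw [Measure.finset_sum_apply]
    have : ∀ i ∈ Finset.Icc 1 n,
        (ENNReal.ofReal (αw n i) • Measure.dirac (X i ω)) Set.univ
          = ENNReal.ofReal (αw n i) := by
      intro i hi
      rw [Measure.smul_apply, smul_eq_mul, measure_univ, mul_one]
    rw [Finset.sum_congr rfl this, ← ENNReal.ofReal_sum_of_nonneg (fun i hi => hα.1 n i hi),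
      hα.2.1 n hn]
    exact ENNReal.ofReal_one
  · funext x
    have hms : MeasurableSet {y : Fin m → ℝ | y ≤ x} := measurableSet_pi_Iic x
    rw [cdfm]
    rw [Measure.finset_sum_apply]
    have hterm : ∀ i ∈ Finset.Icc 1 n,
        (ENNReal.ofReal (αw n i) • Measure.dirac (X i ω)) {y | y ≤ x}
          = ENNReal.ofReal (αw n i * Set.indicator {y : Fin m → ℝ | y ≤ x}
              (fun _ => (1:ℝ)) (X i ω)) := by
      intro i hi
      rw [Measure.smul_apply, smul_eq_mul, Measure.dirac_apply' _ hms]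
      by_cases hx : X i ω ∈ {y : Fin m → ℝ | y ≤ x}
      · rw [Set.indicator_of_mem hx, Set.indicator_of_mem hx, Pi.one_apply, mul_one, mul_one]
      · rw [Set.indicator_of_notMem hx, Set.indicator_of_notMem hx, mul_zero, mul_zero]
        simp
    rw [Finset.sum_congr rfl hterm, ← ENNReal.ofReal_sum_of_nonneg
      (fun i hi => mul_nonneg (hα.1 n i hi) (indicator_nonneg' _ _)),
      ENNReal.toReal_ofReal (Finset.sum_nonneg
        (fun i hi => mul_nonneg (hα.1 n i hi) (indicator_nonneg' _ _)))]
    rfl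

end Glue

section Final

lemma final_package {Ω : Type*} [MeasurableSpace Ω] (P : Measure Ω) [IsProbabilityMeasure P]
    (S : ℕ × ℕ → Ω → ℝ) (c : ℝ)
    (hcore : ∀ ε > (0:ℝ), Tendsto (fun N : ℕ × ℕ => P {ω | S N ω ≤ c - ε}) atTop
      (𝓝 (0:ℝ≥0∞))) :
    ∃ R : ℕ × ℕ → Ω → ℝ, TendstoInMeasure P R (atTop : Filter (ℕ × ℕ)) (fun _ => (0:ℝ)) ∧
      ∀ ε > (0:ℝ), Tendsto (fun N : ℕ × ℕ => P {ω | c - ε + R N ω ≤ S N ω}) atTop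
        (𝓝 (1:ℝ≥0∞)) := by
  refine ⟨fun N ω => min 0 (S N ω - c), ?_, ?_⟩
  · apply tendstoInMeasure_of_ne_top
    intro e he hetop
    have hepos := ENNReal.toReal_pos he.ne' hetop
    have hten := hcore e.toReal hepos
    apply tendsto_of_tendsto_of_tendsto_of_le_of_le' tendsto_const_nhds hten
    · exact Eventually.of_forall fun N => zero_le
    · apply Eventually.of_forall
      intro N
      apply measure_mono
      intro ω hω
      simp only [Set.mem_setOf_eq] at hω ⊢
      replace hω : e.toReal ≤ |min 0 (S N ω - c)| := by
        rw [edist_dist, Real.dist_eq, sub_zero] at hω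
        have := ENNReal.toReal_mono ENNReal.ofReal_ne_top hω
        rwa [ENNReal.toReal_ofReal (abs_nonneg _)] at this
      rcases le_or_gt (S N ω) c with hle | hlt
      · rw [min_eq_right (by linarith)] at hω
        have habs : |S N ω - c| = c - S N ω := by
          rw [abs_of_nonpos (by linarith)]
          ring
        rw [habs] at hω
        linarith
      · rw [min_eq_left (by linarith)] at hω
        simp only [abs_zero] at hω
        linarith
  · intro ε hε
    have huniv : ∀ N : ℕ × ℕ, {ω | c - ε + min 0 (S N ω - c) ≤ S N ω} = Set.univ := by
      intro N
      ext ω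
      simp only [Set.mem_setOf_eq, Set.mem_univ, iff_true]
      rcases le_or_gt (S N ω) c with hle | hlt
      · rw [min_eq_right (by linarith)]
        linarith
      · rw [min_eq_left (by linarith)]
        linarith
    have : (fun N : ℕ × ℕ => P {ω | c - ε + min 0 (S N ω - c) ≤ S N ω})
        = fun _ => (1:ℝ≥0∞) := by
      funext N
      rw [huniv N, measure_univ]
    rw [this]
    exact tendsto_const_nhds

end Final

set_option maxHeartbeats 4000000

/-- Theorem 10 of the paper: in the two-sample Hadamard-functional
setting, without assuming the null hypothesis,
`P(KS_N/(nr)^{1/4} ≥ sup_z |T(F,G)(z) − Q(F,G)(z)| − ε + o_p(1)) → 1` and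
`P(CvM_N/(nr)^{1/2} ≥ ∫ (T(F,G) − Q(F,G))² dT(J) − ε + o_p(1)) → 1` as `min N → ∞`,
where `J = j(F,G)`. -/
theorem statement19 {m s u : ℕ} {Ω : Type*} [MeasurableSpace Ω]
    (P : Measure Ω) [IsProbabilityMeasure P]
    (X : ℕ → Ω → Fin m → ℝ) (V : ℕ → Ω → Fin s → ℝ)
    (hXmeas : ∀ i, Measurable (X i)) (hVmeas : ∀ i, Measurable (V i))
    (hXindep : iIndepFun X P)
    (hVindep : iIndepFun V P)
    (hXV : IndepFun (fun ω (i : ℕ) => X i ω) (fun ω (i : ℕ) => V i ω) P)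
    (F : (Fin m → ℝ) → ℝ) (hF : IsCDF F) (hFuc : UniformContinuous F)
    (hFconv : TendstoUniformly (fun i => cdfm (lawOf P X i)) F atTop)
    (G : (Fin s → ℝ) → ℝ) (hG : IsCDF G) (hGuc : UniformContinuous G)
    (hGconv : TendstoUniformly (fun i => cdfm (lawOf P V i)) G atTop)
    (αw βw : ℕ → ℕ → ℝ) (κ τ : ℝ) (hα : WeightsOK αw κ) (hβ : WeightsOK βw τ)
    (η : ℝ) (hη : 0 < η)
    (hratio : Tendsto (fun N : ℕ × ℕ => (N.1 : ℝ) / (N.2 : ℝ))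
      (atTop : Filter (ℕ × ℕ)) (𝓝 η))
    (T Q : ((Fin m → ℝ) → ℝ) × ((Fin s → ℝ) → ℝ) → (Fin u → ℝ) → ℝ)
    (hTD : ∀ K ∈ cdfPairs m s, IsCDF (T K)) (hQD : ∀ K ∈ cdfPairs m s, IsCDF (Q K))
    (hTc : SupContinuousOnPairs T (cdfPairs m s))
    (hQc : SupContinuousOnPairs Q (cdfPairs m s))
    (j : ((Fin m → ℝ) → ℝ) × ((Fin s → ℝ) → ℝ) →
      ((Fin m → ℝ) → ℝ) × ((Fin s → ℝ) → ℝ))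
    (hjD : ∀ K ∈ cdfPairs m s, j K ∈ cdfPairs m s)
    (hjc : SupContinuousOnPairs2 j (cdfPairs m s))
    (hTQj : ∀ K ∈ cdfPairs m s, T (j K) = Q (j K))
    (hjfix : ∀ K ∈ cdfPairs m s, T K = Q K → j K = K)
    (Tμ : ((Fin m → ℝ) → ℝ) × ((Fin s → ℝ) → ℝ) → Measure (Fin u → ℝ))
    (hTμ : ∀ K ∈ cdfPairs m s, IsProbabilityMeasure (Tμ K) ∧ T K = cdfm (Tμ K)) :
    (∃ R : ℕ × ℕ → Ω → ℝ,
      TendstoInMeasure P R (atTop : Filter (ℕ × ℕ)) (fun _ => (0 : ℝ)) ∧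
      ∀ ε > (0 : ℝ), Tendsto (fun N : ℕ × ℕ =>
          P {ω | (⨆ z, |T (F, G) z - Q (F, G) z|) - ε + R N ω ≤
              ⨆ z, |T (empPair αw βw X V N ω) z - Q (empPair αw βw X V N ω) z|})
        atTop (𝓝 (1 : ℝ≥0∞))) ∧
    (∃ R : ℕ × ℕ → Ω → ℝ,
      TendstoInMeasure P R (atTop : Filter (ℕ × ℕ)) (fun _ => (0 : ℝ)) ∧
      ∀ ε > (0 : ℝ), Tendsto (fun N : ℕ × ℕ =>
          P {ω | (∫ z, (T (F, G) z - Q (F, G) z) ^ 2 ∂(Tμ (j (F, G)))) - ε + R N ω ≤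
              ∫ z, (T (empPair αw βw X V N ω) z - Q (empPair αw βw X V N ω) z) ^ 2
                ∂(Tμ (j (empPair αw βw X V N ω)))})
        atTop (𝓝 (1 : ℝ≥0∞))) := by
  classical
  have hFG : (F, G) ∈ cdfPairs m s := ⟨hF, hG⟩
  have hfst : Tendsto (fun N : ℕ × ℕ => N.1) atTop atTop := by
    rw [← Filter.prod_atTop_atTop_eq]
    exact tendsto_fst
  have hsnd : Tendsto (fun N : ℕ × ℕ => N.2) atTop atTop := by
    rw [← Filter.prod_atTop_atTop_eq]
    exact tendsto_snd
  have hempmem : ∀ (N : ℕ × ℕ), 1 ≤ N.1 → 1 ≤ N.2 → ∀ ω,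
      empPair αw βw X V N ω ∈ cdfPairs m s := by
    intro N hn1 hr1 ω
    exact ⟨isCDF_empCDF hα X hn1 ω, isCDF_empCDF hβ V hr1 ω⟩
  have hpointX : ∀ (N : ℕ × ℕ) (ω : Ω), 1 ≤ N.1 → ∀ d : ℝ,
      (⨆ x, |empCDF αw X N.1 ω x - F x|) < d →
      ∀ x, |F x - empCDF αw X N.1 ω x| ≤ d := by
    intro N ω hn1 d hsup x
    have hb : BddAbove (Set.range fun x => |empCDF αw X N.1 ω x - F x|) := by
      refine ⟨2, ?_⟩
      rintro y ⟨x', rfl⟩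
      have h1 := empCDF_nonneg hα X N.1 ω x'
      have h2 := empCDF_le_one hα X hn1 ω x'
      have h3 := hF.nonneg' x'
      have h4 := hF.le_one' x'
      rw [abs_le]
      constructor <;> linarith
    have := le_ciSup hb x
    rw [abs_sub_comm]
    exact le_of_lt (lt_of_le_of_lt this hsup)
  have hpointV : ∀ (N : ℕ × ℕ) (ω : Ω), 1 ≤ N.2 → ∀ d : ℝ,
      (⨆ v, |empCDF βw V N.2 ω v - G v|) < d →
      ∀ v, |G v - empCDF βw V N.2 ω v| ≤ d := by
    intro N ω hr1 d hsup v
    have hb : BddAbove (Set.range fun v => |empCDF βw V N.2 ω v - G v|) := by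
      refine ⟨2, ?_⟩
      rintro y ⟨v', rfl⟩
      have h1 := empCDF_nonneg hβ V N.2 ω v'
      have h2 := empCDF_le_one hβ V hr1 ω v'
      have h3 := hG.nonneg' v'
      have h4 := hG.le_one' v'
      rw [abs_le]
      constructor <;> linarith
    have := le_ciSup hb v
    rw [abs_sub_comm]
    exact le_of_lt (lt_of_le_of_lt this hsup)
  have hdistP : ∀ (N : ℕ × ℕ) (ω : Ω), 1 ≤ N.1 → 1 ≤ N.2 → ∀ d : ℝ, 0 < d →
      (⨆ x, |empCDF αw X N.1 ω x - F x|) < d / 2 →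
      (⨆ v, |empCDF βw V N.2 ω v - G v|) < d / 2 →
      supEDistP (F, G) (empPair αw βw X V N ω) < ENNReal.ofReal d := by
    intro N ω hn1 hr1 d hd hsX hsV
    rw [supEDistP]
    apply max_lt
    · exact supEDist_lt_of_le hd (hpointX N ω hn1 (d / 2) hsX)
    · exact supEDist_lt_of_le hd (hpointV N ω hr1 (d / 2) hsV)
  have hcore : ∀ (c : ℝ) (Sf : ℕ × ℕ → Ω → ℝ),
      (∀ ε > (0:ℝ), ∃ d > (0:ℝ), ∀ N : ℕ × ℕ, 1 ≤ N.1 → 1 ≤ N.2 → ∀ ω : Ω,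
        (⨆ x, |empCDF αw X N.1 ω x - F x|) < d → (⨆ v, |empCDF βw V N.2 ω v - G v|) < d →
        c - ε < Sf N ω) →
      ∀ ε > (0:ℝ), Tendsto (fun N : ℕ × ℕ => P {ω | Sf N ω ≤ c - ε}) atTop
        (𝓝 (0:ℝ≥0∞)) := by
    intro c Sf hdet ε hε
    obtain ⟨d, hd, himp⟩ := hdet ε hε
    have hXc : Tendsto (fun N : ℕ × ℕ => P {ω | d ≤ ⨆ x, |empCDF αw X N.1 ω x - F x|})
        atTop (𝓝 0) :=
      (gc_main P X hXmeas hXindep F hF hFuc hFconv αw κ hα hd).comp hfst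
    have hVc : Tendsto (fun N : ℕ × ℕ => P {ω | d ≤ ⨆ v, |empCDF βw V N.2 ω v - G v|})
        atTop (𝓝 0) :=
      (gc_main P V hVmeas hVindep G hG hGuc hGconv βw τ hβ hd).comp hsnd
    have hsum : Tendsto (fun N : ℕ × ℕ =>
        P {ω | d ≤ ⨆ x, |empCDF αw X N.1 ω x - F x|}
          + P {ω | d ≤ ⨆ v, |empCDF βw V N.2 ω v - G v|}) atTop (𝓝 0) := by
      have := hXc.add hVc
      simpa using this
    apply tendsto_of_tendsto_of_tendsto_of_le_of_le' tendsto_const_nhds hsum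
    · exact Eventually.of_forall fun N => zero_le
    · filter_upwards [hfst.eventually (eventually_ge_atTop 1),
        hsnd.eventually (eventually_ge_atTop 1)] with N hn1 hr1
      have hsub : {ω | Sf N ω ≤ c - ε} ⊆
          {ω | d ≤ ⨆ x, |empCDF αw X N.1 ω x - F x|}
            ∪ {ω | d ≤ ⨆ v, |empCDF βw V N.2 ω v - G v|} := by
        intro ω hω
        by_contra hno
        simp only [Set.mem_union, Set.mem_setOf_eq, not_or, not_le] at hno
        have := himp N hn1 hr1 ω hno.1 hno.2
        simp only [Set.mem_setOf_eq] at hω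
        linarith
      calc P {ω | Sf N ω ≤ c - ε}
          ≤ P ({ω | d ≤ ⨆ x, |empCDF αw X N.1 ω x - F x|}
            ∪ {ω | d ≤ ⨆ v, |empCDF βw V N.2 ω v - G v|}) := measure_mono hsub
        _ ≤ P {ω | d ≤ ⨆ x, |empCDF αw X N.1 ω x - F x|}
            + P {ω | d ≤ ⨆ v, |empCDF βw V N.2 ω v - G v|} := measure_union_le _ _
  -- KS deterministic transfer
  have hKSdet : ∀ ε > (0:ℝ), ∃ d > (0:ℝ), ∀ N : ℕ × ℕ, 1 ≤ N.1 → 1 ≤ N.2 → ∀ ω : Ω,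
      (⨆ x, |empCDF αw X N.1 ω x - F x|) < d → (⨆ v, |empCDF βw V N.2 ω v - G v|) < d →
      (⨆ z, |T (F, G) z - Q (F, G) z|) - ε <
        ⨆ z, |T (empPair αw βw X V N ω) z - Q (empPair αw βw X V N ω) z| := by
    intro ε hε
    obtain ⟨δT, hδT0, hT⟩ := hTc (F, G) hFG (ε / 4) (by positivity)
    obtain ⟨δQ, hδQ0, hQ⟩ := hQc (F, G) hFG (ε / 4) (by positivity)
    have hdd0 : 0 < min δT δQ := lt_min hδT0 hδQ0
    refine ⟨min δT δQ / 2, by positivity, ?_⟩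
    intro N hn1 hr1 ω hsX hsV
    have hKpmem : empPair αw βw X V N ω ∈ cdfPairs m s := hempmem N hn1 hr1 ω
    have hdist : supEDistP (F, G) (empPair αw βw X V N ω) < ENNReal.ofReal (min δT δQ) :=
      hdistP N ω hn1 hr1 (min δT δQ) hdd0 hsX hsV
    have hTclose := hT (empPair αw βw X V N ω) hKpmem (lt_of_lt_of_le hdist
      (ENNReal.ofReal_le_ofReal (min_le_left _ _)))
    have hQclose := hQ (empPair αw βw X V N ω) hKpmem (lt_of_lt_of_le hdist
      (ENNReal.ofReal_le_ofReal (min_le_right _ _)))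
    have hz : ∃ z : Fin u → ℝ, (⨆ z', |T (F, G) z' - Q (F, G) z'|) - ε / 2
        < |T (F, G) z - Q (F, G) z| := by
      apply exists_lt_of_lt_ciSup
      linarith
    obtain ⟨z, hzlt⟩ := hz
    have hTz := abs_lt_of_supEDist_lt hTclose z
    have hQz := abs_lt_of_supEDist_lt hQclose z
    have hlow : (⨆ z', |T (F, G) z' - Q (F, G) z'|) - ε
        < |T (empPair αw βw X V N ω) z - Q (empPair αw βw X V N ω) z| := by
      have h1 : |T (F, G) z - Q (F, G) z| ≤
          |T (empPair αw βw X V N ω) z - Q (empPair αw βw X V N ω) z|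
            + (|T (F, G) z - T (empPair αw βw X V N ω) z|
              + |Q (F, G) z - Q (empPair αw βw X V N ω) z|) := by
        calc |T (F, G) z - Q (F, G) z|
            = |(T (empPair αw βw X V N ω) z - Q (empPair αw βw X V N ω) z)
              + ((T (F, G) z - T (empPair αw βw X V N ω) z)
                - (Q (F, G) z - Q (empPair αw βw X V N ω) z))| := by
              congr 1
              ring
          _ ≤ |T (empPair αw βw X V N ω) z - Q (empPair αw βw X V N ω) z|
              + |(T (F, G) z - T (empPair αw βw X V N ω) z)
                - (Q (F, G) z - Q (empPair αw βw X V N ω) z)| := abs_add_le _ _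
          _ ≤ |T (empPair αw βw X V N ω) z - Q (empPair αw βw X V N ω) z|
              + (|T (F, G) z - T (empPair αw βw X V N ω) z|
                + |Q (F, G) z - Q (empPair αw βw X V N ω) z|) := by
              gcongr
              exact abs_sub _ _
      linarith
    have hbddS : BddAbove (Set.range fun z' =>
        |T (empPair αw βw X V N ω) z' - Q (empPair αw βw X V N ω) z'|) := by
      refine ⟨2, ?_⟩
      rintro y ⟨z', rfl⟩
      have h1 := (hTD _ hKpmem).nonneg' z'
      have h2 := (hTD _ hKpmem).le_one' z'
      have h3 := (hQD _ hKpmem).nonneg' z'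
      have h4 := (hQD _ hKpmem).le_one' z'
      rw [abs_le]
      constructor <;> linarith
    calc (⨆ z', |T (F, G) z' - Q (F, G) z'|) - ε
        < |T (empPair αw βw X V N ω) z - Q (empPair αw βw X V N ω) z| := hlow
      _ ≤ ⨆ z', |T (empPair αw βw X V N ω) z' - Q (empPair αw βw X V N ω) z'| :=
        le_ciSup hbddS z
  -- CvM deterministic transfer
  have hCvMdet : ∀ ε > (0:ℝ), ∃ d > (0:ℝ), ∀ N : ℕ × ℕ, 1 ≤ N.1 → 1 ≤ N.2 → ∀ ω : Ω,
      (⨆ x, |empCDF αw X N.1 ω x - F x|) < d → (⨆ v, |empCDF βw V N.2 ω v - G v|) < d →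
      (∫ z, (T (F, G) z - Q (F, G) z) ^ 2 ∂(Tμ (j (F, G)))) - ε <
        ∫ z, (T (empPair αw βw X V N ω) z - Q (empPair αw βw X V N ω) z) ^ 2
          ∂(Tμ (j (empPair αw βw X V N ω))) := by
    intro ε hε
    have hε₁0 : 0 < ε / 8 := by positivity
    have h2u : (0:ℝ) < 2 ^ u := by positivity
    have hε₂0 : 0 < ε / (16 * 2 ^ u) := by positivity
    obtain ⟨δT, hδT0, hT⟩ := hTc (F, G) hFG (ε / 16) (by positivity)
    obtain ⟨δQ, hδQ0, hQ⟩ := hQc (F, G) hFG (ε / 16) (by positivity)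
    obtain ⟨δ4, hδ40, hT4⟩ := hTc (j (F, G)) (hjD (F, G) hFG) (ε / (16 * 2 ^ u)) hε₂0
    obtain ⟨δ3, hδ30, hj3⟩ := hjc (F, G) hFG δ4 hδ40
    have hdd0 : 0 < min (min δT δQ) δ3 := lt_min (lt_min hδT0 hδQ0) hδ30
    refine ⟨min (min δT δQ) δ3 / 2, by positivity, ?_⟩
    intro N hn1 hr1 ω hsX hsV
    have hKpmem : empPair αw βw X V N ω ∈ cdfPairs m s := hempmem N hn1 hr1 ω
    have hdist : supEDistP (F, G) (empPair αw βw X V N ω)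
        < ENNReal.ofReal (min (min δT δQ) δ3) :=
      hdistP N ω hn1 hr1 _ hdd0 hsX hsV
    have hTclose := hT (empPair αw βw X V N ω) hKpmem (lt_of_lt_of_le hdist
      (ENNReal.ofReal_le_ofReal (le_trans (min_le_left _ _) (min_le_left _ _))))
    have hQclose := hQ (empPair αw βw X V N ω) hKpmem (lt_of_lt_of_le hdist
      (ENNReal.ofReal_le_ofReal (le_trans (min_le_left _ _) (min_le_right _ _))))
    have hjclose := hj3 (empPair αw βw X V N ω) hKpmem (lt_of_lt_of_le hdist
      (ENNReal.ofReal_le_ofReal (min_le_right _ _)))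
    have hT4close := hT4 (j (empPair αw βw X V N ω)) (hjD _ hKpmem) hjclose
    obtain ⟨hprob0, hcdf0⟩ := hTμ (j (F, G)) (hjD (F, G) hFG)
    obtain ⟨hprobN, hcdfN⟩ := hTμ (j (empPair αw βw X V N ω)) (hjD _ hKpmem)
    haveI := hprob0
    haveI := hprobN
    obtain ⟨a0, ha0prob, ha0⟩ := hTD (F, G) hFG
    obtain ⟨b0, hb0prob, hb0⟩ := hQD (F, G) hFG
    obtain ⟨aN, haNprob, haN⟩ := hTD (empPair αw βw X V N ω) hKpmem
    obtain ⟨bN, hbNprob, hbN⟩ := hQD (empPair αw βw X V N ω) hKpmem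
    haveI := ha0prob; haveI := hb0prob; haveI := haNprob; haveI := hbNprob
    -- pointwise closeness of integrands
    have hfN : ∀ z, |(cdfm aN z - cdfm bN z) - (cdfm a0 z - cdfm b0 z)| ≤ ε / 8 := by
      intro z
      have h1 := abs_lt_of_supEDist_lt hTclose z
      have h2 := abs_lt_of_supEDist_lt hQclose z
      rw [← haN, ← hbN, ← ha0, ← hb0]
      have heq : (T (empPair αw βw X V N ω) z - Q (empPair αw βw X V N ω) z)
          - (T (F, G) z - Q (F, G) z)
          = -(T (F, G) z - T (empPair αw βw X V N ω) z)
            + (Q (F, G) z - Q (empPair αw βw X V N ω) z) := by ring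
      rw [heq]
      calc |-(T (F, G) z - T (empPair αw βw X V N ω) z)
            + (Q (F, G) z - Q (empPair αw βw X V N ω) z)|
          ≤ |-(T (F, G) z - T (empPair αw βw X V N ω) z)|
            + |Q (F, G) z - Q (empPair αw βw X V N ω) z| := abs_add_le _ _
        _ = |T (F, G) z - T (empPair αw βw X V N ω) z|
            + |Q (F, G) z - Q (empPair αw βw X V N ω) z| := by rw [abs_neg]
        _ ≤ ε / 16 + ε / 16 := by
            exact add_le_add (le_of_lt h1) (le_of_lt h2)
        _ = ε / 8 := by ring
    -- cdf closeness of the transformed measures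
    have hμcmp : ∀ x, |cdfm (Tμ (j (empPair αw βw X V N ω))) x - cdfm (Tμ (j (F, G))) x|
        ≤ ε / (16 * 2 ^ u) := by
      intro x
      rw [← hcdf0, ← hcdfN, abs_sub_comm]
      exact le_of_lt (abs_lt_of_supEDist_lt hT4close x)
    have hcmp := integral_sq_sub_cmp a0 b0 (Tμ (j (empPair αw βw X V N ω)))
      (Tμ (j (F, G))) hμcmp
    -- integrability
    have hdiffb : ∀ (c e : Measure (Fin u → ℝ)), IsProbabilityMeasure c →
        IsProbabilityMeasure e → ∀ z, |cdfm c z - cdfm e z| ≤ 1 := by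
      intro c e hc he z
      haveI := hc; haveI := he
      rw [abs_le]
      constructor <;>
        linarith [cdfm_nonneg c z, cdfm_le_one c z, cdfm_nonneg e z, cdfm_le_one e z]
    have hintN : Integrable (fun z => (cdfm aN z - cdfm bN z) ^ 2)
        (Tμ (j (empPair αw βw X V N ω))) := by
      apply integrable_of_bounded' _
        ((((measurable_cdfm aN).sub (measurable_cdfm bN)).pow_const 2).aestronglyMeasurable)
        (C := 1)
      intro z
      show |(cdfm aN z - cdfm bN z) ^ 2| ≤ 1
      rw [abs_of_nonneg (sq_nonneg _), sq]
      have := hdiffb aN bN inferInstance inferInstance z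
      nlinarith [abs_nonneg (cdfm aN z - cdfm bN z), sq_abs (cdfm aN z - cdfm bN z)]
    have hint0 : Integrable (fun z => (cdfm a0 z - cdfm b0 z) ^ 2)
        (Tμ (j (empPair αw βw X V N ω))) := by
      apply integrable_of_bounded' _
        ((((measurable_cdfm a0).sub (measurable_cdfm b0)).pow_const 2).aestronglyMeasurable)
        (C := 1)
      intro z
      show |(cdfm a0 z - cdfm b0 z) ^ 2| ≤ 1
      rw [abs_of_nonneg (sq_nonneg _), sq]
      have := hdiffb a0 b0 inferInstance inferInstance z
      nlinarith [abs_nonneg (cdfm a0 z - cdfm b0 z), sq_abs (cdfm a0 z - cdfm b0 z)]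
    -- pointwise comparison of squares
    have hpw : ∀ z, (cdfm a0 z - cdfm b0 z) ^ 2 - 2 * (ε / 8)
        ≤ (cdfm aN z - cdfm bN z) ^ 2 := by
      intro z
      have h1 := hfN z
      have h2 := hdiffb aN bN inferInstance inferInstance z
      have h3 := hdiffb a0 b0 inferInstance inferInstance z
      have h4 : (cdfm a0 z - cdfm b0 z) ^ 2 - (cdfm aN z - cdfm bN z) ^ 2
          = ((cdfm a0 z - cdfm b0 z) - (cdfm aN z - cdfm bN z))
            * ((cdfm a0 z - cdfm b0 z) + (cdfm aN z - cdfm bN z)) := by ring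
      have h5 : ((cdfm a0 z - cdfm b0 z) - (cdfm aN z - cdfm bN z))
            * ((cdfm a0 z - cdfm b0 z) + (cdfm aN z - cdfm bN z))
          ≤ |(cdfm a0 z - cdfm b0 z) - (cdfm aN z - cdfm bN z)|
            * |(cdfm a0 z - cdfm b0 z) + (cdfm aN z - cdfm bN z)| := by
        calc ((cdfm a0 z - cdfm b0 z) - (cdfm aN z - cdfm bN z))
              * ((cdfm a0 z - cdfm b0 z) + (cdfm aN z - cdfm bN z))
            ≤ |((cdfm a0 z - cdfm b0 z) - (cdfm aN z - cdfm bN z))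
              * ((cdfm a0 z - cdfm b0 z) + (cdfm aN z - cdfm bN z))| := le_abs_self _
          _ = |(cdfm a0 z - cdfm b0 z) - (cdfm aN z - cdfm bN z)|
              * |(cdfm a0 z - cdfm b0 z) + (cdfm aN z - cdfm bN z)| := abs_mul _ _
      have h6 : |(cdfm a0 z - cdfm b0 z) - (cdfm aN z - cdfm bN z)| ≤ ε / 8 := by
        rw [abs_sub_comm]
        exact h1
      have h7 : |(cdfm a0 z - cdfm b0 z) + (cdfm aN z - cdfm bN z)| ≤ 2 := by
        calc |(cdfm a0 z - cdfm b0 z) + (cdfm aN z - cdfm bN z)|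
            ≤ |cdfm a0 z - cdfm b0 z| + |cdfm aN z - cdfm bN z| := abs_add_le _ _
          _ ≤ 2 := by linarith
      have h8 := mul_le_mul h6 h7 (abs_nonneg _) hε₁0.le
      linarith
    -- integral monotonicity
    have hmono : ∫ z, ((cdfm a0 z - cdfm b0 z) ^ 2 - 2 * (ε / 8))
          ∂(Tμ (j (empPair αw βw X V N ω)))
        ≤ ∫ z, (cdfm aN z - cdfm bN z) ^ 2 ∂(Tμ (j (empPair αw βw X V N ω))) :=
      integral_mono (hint0.sub (integrable_const _)) hintN hpw
    rw [integral_sub hint0 (integrable_const _), integral_const, probReal_univ,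
      one_smul] at hmono
    have habs := abs_le.1 hcmp
    have harith : 4 * (2:ℝ) ^ u * (ε / (16 * 2 ^ u)) = ε / 4 := by
      field_simp
      ring
    have hgoal1 : (∫ z, (T (F, G) z - Q (F, G) z) ^ 2 ∂(Tμ (j (F, G))))
        = ∫ z, (cdfm a0 z - cdfm b0 z) ^ 2 ∂(Tμ (j (F, G))) := by
      rw [ha0, hb0]
    have hgoal2 : (∫ z, (T (empPair αw βw X V N ω) z - Q (empPair αw βw X V N ω) z) ^ 2
          ∂(Tμ (j (empPair αw βw X V N ω))))
        = ∫ z, (cdfm aN z - cdfm bN z) ^ 2 ∂(Tμ (j (empPair αw βw X V N ω))) := by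
      rw [haN, hbN]
    rw [hgoal1, hgoal2]
    rw [harith] at habs
    linarith [habs.1, habs.2]
  refine ⟨?_, ?_⟩
  · exact final_package P
      (fun N ω => ⨆ z, |T (empPair αw βw X V N ω) z - Q (empPair αw βw X V N ω) z|)
      (⨆ z, |T (F, G) z - Q (F, G) z|)
      (hcore _ _ hKSdet)
  · exact final_package P
      (fun N ω => ∫ z, (T (empPair αw βw X V N ω) z - Q (empPair αw βw X V N ω) z) ^ 2
        ∂(Tμ (j (empPair αw βw X V N ω))))
      (∫ z, (T (F, G) z - Q (F, G) z) ^ 2 ∂(Tμ (j (F, G))))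
      (hcore _ _ hCvMdet)
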